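/- arXiv:2309.06523 — 14 statements merged into one kernel-verified Lean document; each statement's English description precedes it below -/
import Mathlib

section
/- For every directed set P there exists a locally compact Hausdorff topological space X such that P is Tukey equivalent to K(X), the set of all compact subsets of X ordered by inclusion. -/
open Set Topology Cardinal

universe u

/-- A map `ψ : Q → P` is a Tukey map if the image of every unbounded set is unbounded. -/
def IsTukeyMap {Q P : Type*} [Preorder Q] [Preorder P] (ψ : Q → P) : Prop :=
  ∀ S : Set Q, ¬ BddAbove S → ¬ BddAbove (ψ '' S)

/-- `TukeyGE P Q` means `P ≥_T Q`: there is a Tukey map from `Q` to `P`. -/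
def TukeyGE (P Q : Type*) [Preorder P] [Preorder Q] : Prop :=
  ∃ ψ : Q → P, IsTukeyMap ψ

/-- Tukey equivalence of directed sets. -/
def TukeyEquiv (P Q : Type*) [Preorder P] [Preorder Q] : Prop :=
  TukeyGE P Q ∧ TukeyGE Q P

/-- The poset of all compact subsets of `X`, ordered by inclusion. -/
abbrev CompactsPoset (X : Type*) [TopologicalSpace X] :=
  {K : Set X // IsCompact K}

/-! ### Auxiliary construction

`UpFuns P` is the space of (indicator functions of) upper sets of `P`, a closed subspace of
`P → Bool`, hence compact Hausdorff.  `NUpFuns P` is the open subspace of nonempty upper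
sets, hence locally compact Hausdorff.  The sets `Kset p` of upper sets containing `p`
form a cofinal, order-embedded copy of `P` inside `K(NUpFuns P)`. -/

/-- Indicator functions of upper sets of `P`. -/
abbrev UpFuns (P : Type u) [Preorder P] : Type u :=
  {f : P → Bool // ∀ ⦃a b : P⦄, a ≤ b → f a = true → f b = true}

/-- Indicator functions of nonempty upper sets of `P`. -/
abbrev NUpFuns (P : Type u) [Preorder P] : Type u :=
  {z : UpFuns P // ∃ a, (z : P → Bool) a = true}

variable {P : Type u} [Preorder P]

omit [Preorder P] in
lemma isClopen_apply_true (a : P) : IsClopen {f : P → Bool | f a = true} := by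
  have h : {f : P → Bool | f a = true} = (fun f : P → Bool => f a) ⁻¹' {true} := by
    ext f; simp
  rw [h]
  exact (isClopen_discrete _).preimage (continuous_apply a)

lemma isClosed_upFuns :
    IsClosed {f : P → Bool | ∀ ⦃a b : P⦄, a ≤ b → f a = true → f b = true} := by
  have : {f : P → Bool | ∀ ⦃a b : P⦄, a ≤ b → f a = true → f b = true}
      = ⋂ (a : P), ⋂ (b : P), ⋂ (_ : a ≤ b),
          {f : P → Bool | f a = true} ᶜ ∪ {f : P → Bool | f b = true} := by
    ext f
    simp only [Set.mem_setOf_eq, Set.mem_iInter, Set.mem_union, Set.mem_compl_iff]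
    constructor
    · intro h a b hab
      by_cases hfa : f a = true
      · exact Or.inr (h hab hfa)
      · exact Or.inl hfa
    · intro h a b hab hfa
      rcases h a b hab with h' | h'
      · exact absurd hfa h'
      · exact h'
  rw [this]
  refine isClosed_iInter fun a => isClosed_iInter fun b => isClosed_iInter fun _ => ?_
  exact IsClosed.union (isClosed_compl_iff.mpr (isClopen_apply_true (P := P) a).2)
    (isClopen_apply_true (P := P) b).1

lemma isClopen_eval_true (p : P) : IsClopen {z : UpFuns P | (z : P → Bool) p = true} := by
  have h : {z : UpFuns P | (z : P → Bool) p = true}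
      = (fun z : UpFuns P => (z : P → Bool) p) ⁻¹' {true} := by
    ext z; simp
  rw [h]
  exact (isClopen_discrete _).preimage ((continuous_apply p).comp continuous_subtype_val)

lemma isOpen_eval_true (p : P) : IsOpen {z : UpFuns P | (z : P → Bool) p = true} :=
  (isClopen_eval_true p).2

lemma isClosed_eval_true (p : P) : IsClosed {z : UpFuns P | (z : P → Bool) p = true} :=
  (isClopen_eval_true p).1

instance : CompactSpace (UpFuns P) :=
  isCompact_iff_compactSpace.mp isClosed_upFuns.isCompact

instance : LocallyCompactSpace (NUpFuns P) := by
  have hopen : IsOpen {z : UpFuns P | ∃ a, (z : P → Bool) a = true} := by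
    have : {z : UpFuns P | ∃ a, (z : P → Bool) a = true}
        = ⋃ a : P, {z : UpFuns P | (z : P → Bool) a = true} := by
      ext z; simp [Set.mem_iUnion]
    rw [this]
    exact isOpen_iUnion fun a => isOpen_eval_true a
  exact hopen.locallyCompactSpace

/-- The compact open set of nonempty upper sets containing `p`. -/
def Kset (P : Type u) [Preorder P] (p : P) : Set (NUpFuns P) :=
  {x | (x : P → Bool) p = true}

lemma isCompact_Kset (p : P) : IsCompact (Kset P p) := by
  rw [Subtype.isCompact_iff]
  have himg : (Subtype.val '' Kset P p) = {z : UpFuns P | (z : P → Bool) p = true} := by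
    ext z
    constructor
    · rintro ⟨x, hx, rfl⟩; exact hx
    · intro hz; exact ⟨⟨z, ⟨p, hz⟩⟩, hz, rfl⟩
  rw [himg]
  exact (isClosed_eval_true p).isCompact

lemma isOpen_Kset (p : P) : IsOpen (Kset P p) :=
  (isOpen_eval_true p).preimage continuous_subtype_val

lemma Kset_mono {p q : P} (h : p ≤ q) : Kset P p ⊆ Kset P q := fun x hx => x.1.2 h hx

/-- The principal upper set `↑p` as a point of `NUpFuns P`. -/
noncomputable def upPt (P : Type u) [Preorder P] (p : P) : NUpFuns P := by
  classical
  exact ⟨⟨fun r => decide (p ≤ r), fun a b hab ha => by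
      simp only [decide_eq_true_eq] at ha ⊢; exact ha.trans hab⟩,
    ⟨p, by simp⟩⟩

lemma upPt_mem (p : P) : upPt P p ∈ Kset P p := by
  simp [upPt, Kset]

lemma Kset_reflect {p q : P} (h : Kset P p ⊆ Kset P q) : p ≤ q := by
  have := h (upPt_mem p)
  simpa [upPt, Kset] using this

/-- Every compact subset of `NUpFuns P` is contained in some `Kset P m`. -/
lemma exists_Kset_superset (hP : ∀ S : Set P, S.Finite → BddAbove S)
    (C : Set (NUpFuns P)) (hC : IsCompact C) : ∃ m, C ⊆ Kset P m := by
  have hcover : C ⊆ ⋃ p : P, Kset P p := by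
    intro x _
    obtain ⟨a, ha⟩ := x.2
    exact Set.mem_iUnion.mpr ⟨a, ha⟩
  obtain ⟨t, ht⟩ := hC.elim_finite_subcover (fun p => Kset P p)
    (fun p => isOpen_Kset p) hcover
  obtain ⟨m, hm⟩ := hP (↑t) t.finite_toSet
  refine ⟨m, fun x hx => ?_⟩
  obtain ⟨p, hpt, hxp⟩ := Set.mem_iUnion₂.mp (ht hx)
  exact Kset_mono (hm hpt) hxp

/-- Every directed set is Tukey equivalent to `K(X)` for some locally compact
Hausdorff space `X`. -/
theorem stmt0 {P : Type u} [Preorder P]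
    (hP : ∀ S : Set P, S.Finite → BddAbove S) :
    ∃ (X : Type u) (t : TopologicalSpace X),
      letI := t
      T2Space X ∧ LocallyCompactSpace X ∧ TukeyEquiv P (CompactsPoset X) := by
  classical
  refine ⟨NUpFuns P, inferInstance, inferInstance, inferInstance, ?_, ?_⟩
  · -- TukeyGE P (CompactsPoset X) : a Tukey map CompactsPoset X → P
    have hex : ∀ C : CompactsPoset (NUpFuns P), ∃ m, (C.1 : Set (NUpFuns P)) ⊆ Kset P m :=
      fun C => exists_Kset_superset hP C.1 C.2
    refine ⟨fun C => (hex C).choose, ?_⟩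
    intro S hS hb
    apply hS
    obtain ⟨m₀, hm₀⟩ := hb
    refine ⟨⟨Kset P m₀, isCompact_Kset m₀⟩, ?_⟩
    intro C hCS
    have h1 : (hex C).choose ≤ m₀ := hm₀ ⟨C, hCS, rfl⟩
    have h2 : (C.1 : Set (NUpFuns P)) ⊆ Kset P m₀ :=
      (hex C).choose_spec.trans (Kset_mono h1)
    exact h2
  · -- TukeyGE (CompactsPoset X) P : a Tukey map P → CompactsPoset X
    refine ⟨fun p => ⟨Kset P p, isCompact_Kset p⟩, ?_⟩
    intro S hS hb
    apply hS
    obtain ⟨C, hC⟩ := hb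
    obtain ⟨m, hm⟩ := exists_Kset_superset hP C.1 C.2
    refine ⟨m, ?_⟩
    intro p hp
    have h1 : Kset P p ⊆ (C.1 : Set (NUpFuns P)) := hC ⟨p, hp, rfl⟩
    exact Kset_reflect (h1.trans hm)
end

section
/- For every directed set P there exists a compact Hausdorff topological space K and a point x of K such that P is Tukey equivalent to N_x, the set of all neighborhoods of x in K ordered by reverse inclusion. -/
open Set Topology Cardinal

universe u

/-- The poset of all neighborhoods of a point, ordered by reverse inclusion. -/
abbrev NbhdPoset {X : Type*} [TopologicalSpace X] (x : X) :=
  ({U : Set X // U ∈ nhds x})ᵒᵈ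

section Aux

variable {P : Type u} [Preorder P]

/-- The defining condition of our compact space: `f` is (the indicator of) a family with the
finite intersection property with respect to the sets `{r | ¬ r ≤ p}` and their complements. -/
def Kcond (f : P → Bool) : Prop :=
  ∀ s t : Finset P, (∀ p ∈ s, f p = true) → (∀ q ∈ t, f q = false) →
    ∃ r : P, (∀ p ∈ s, ¬ r ≤ p) ∧ (∀ q ∈ t, r ≤ q)

lemma kcond_closed : IsClosed {f : P → Bool | Kcond f} := by
  have hrw : {f : P → Bool | Kcond f} =
      ⋂ (s : Finset P) (t : Finset P),
        {f : P → Bool | (∀ p ∈ s, f p = true) → (∀ q ∈ t, f q = false) →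
          ∃ r : P, (∀ p ∈ s, ¬ r ≤ p) ∧ (∀ q ∈ t, r ≤ q)} := by
    ext f
    simp only [Set.mem_iInter, Set.mem_setOf_eq]
    exact Iff.rfl
  rw [hrw]
  refine isClosed_iInter fun s => isClosed_iInter fun t => ?_
  by_cases hE : ∃ r : P, (∀ p ∈ s, ¬ r ≤ p) ∧ (∀ q ∈ t, r ≤ q)
  · have : {f : P → Bool | (∀ p ∈ s, f p = true) → (∀ q ∈ t, f q = false) →
        ∃ r : P, (∀ p ∈ s, ¬ r ≤ p) ∧ (∀ q ∈ t, r ≤ q)} = Set.univ :=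
      Set.eq_univ_of_forall fun f _ _ => hE
    rw [this]; exact isClosed_univ
  · have : {f : P → Bool | (∀ p ∈ s, f p = true) → (∀ q ∈ t, f q = false) →
        ∃ r : P, (∀ p ∈ s, ¬ r ≤ p) ∧ (∀ q ∈ t, r ≤ q)} =
        ((⋂ p ∈ s, {f : P → Bool | f p = true}) ∩ ⋂ q ∈ t, {f : P → Bool | f q = false})ᶜ := by
      ext f
      simp only [Set.mem_setOf_eq, Set.mem_compl_iff, Set.mem_inter_iff, Set.mem_iInter]
      constructor
      · intro h ⟨h1, h2⟩
        exact hE (h h1 h2)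
      · intro h h1 h2
        exact absurd ⟨h1, h2⟩ h
    rw [this]
    refine IsOpen.isClosed_compl (IsOpen.inter ?_ ?_)
    · refine isOpen_biInter_finset fun p _ => ?_
      have h : {f : P → Bool | f p = true} = (fun f : P → Bool => f p) ⁻¹' {true} := rfl
      rw [h]
      exact (isOpen_discrete {true}).preimage (continuous_apply p)
    · refine isOpen_biInter_finset fun q _ => ?_
      have h : {f : P → Bool | f q = false} = (fun f : P → Bool => f q) ⁻¹' {false} := rfl
      rw [h]
      exact (isOpen_discrete {false}).preimage (continuous_apply q)

lemma kcond_mono {f : P → Bool} (hf : Kcond f) {p q : P} (h : q ≤ p) (hp : f p = true) :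
    f q = true := by
  by_contra hq
  rw [Bool.not_eq_true] at hq
  obtain ⟨r, hr1, hr2⟩ := hf {p} {q} (by simpa using hp) (by simpa using hq)
  exact hr1 p (Finset.mem_singleton_self p) ((hr2 q (Finset.mem_singleton_self q)).trans h)

open Classical in
/-- The "principal ultrafilter" point associated to `p`. -/
noncomputable def principalPt (p : P) : P → Bool := fun r => if p ≤ r then false else true

lemma principalPt_eq_true {p r : P} : principalPt p r = true ↔ ¬ p ≤ r := by
  classical
  simp only [principalPt]
  by_cases h : p ≤ r <;> simp [h]

lemma kcond_principal (p : P) : Kcond (principalPt p) := by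
  intro s t h1 h2
  refine ⟨p, fun p' hp' => ?_, fun q hq => ?_⟩
  · exact principalPt_eq_true.mp (h1 p' hp')
  · by_contra hpq
    have : principalPt p q = true := principalPt_eq_true.mpr hpq
    rw [h2 q hq] at this
    exact Bool.false_ne_true this

end Aux

/-- Every directed set is Tukey equivalent to the neighborhood filter of a point
of a compact Hausdorff space. -/
theorem stmt1 {P : Type u} [Preorder P]
    (hP : ∀ S : Set P, S.Finite → BddAbove S) :
    ∃ (K : Type u) (t : TopologicalSpace K),
      letI := t
      CompactSpace K ∧ T2Space K ∧ ∃ x : K, TukeyEquiv P (NbhdPoset x) := by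
  classical
  by_cases hbd : ∃ p : P, ∀ q : P, q ≤ p
  · -- P is bounded: use a one-point space
    obtain ⟨p₀, hp₀⟩ := hbd
    refine ⟨PUnit.{u+1}, inferInstance, ?_⟩
    refine ⟨inferInstance, inferInstance, PUnit.unit, ?_⟩
    have hPbdd : ∀ S : Set P, BddAbove S := fun S => ⟨p₀, fun a _ => hp₀ a⟩
    have hNbdd : ∀ S : Set (NbhdPoset (PUnit.unit : PUnit.{u+1})), BddAbove S := by
      intro S
      refine ⟨OrderDual.toDual ⟨Set.univ, Filter.univ_mem⟩, fun W _ => ?_⟩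
      show Set.univ ⊆ (OrderDual.ofDual W).1
      intro y _
      have hx : PUnit.unit ∈ (OrderDual.ofDual W).1 :=
        mem_of_mem_nhds (OrderDual.ofDual W).2
      cases y
      exact hx
    exact ⟨⟨fun _ => p₀, fun S hS => absurd (hNbdd S) hS⟩,
      ⟨fun _ => OrderDual.toDual ⟨Set.univ, Filter.univ_mem⟩,
        fun S hS => absurd (hPbdd S) hS⟩⟩
  · -- P is unbounded
    push_neg at hbd
    set K := {f : P → Bool // Kcond f} with hK
    haveI : CompactSpace K :=
      isCompact_iff_compactSpace.mp kcond_closed.isCompact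
    refine ⟨K, inferInstance, inferInstance, inferInstance, ?_⟩
    -- the point
    have hxmem : Kcond (fun _ : P => true) := by
      intro s t h1 h2
      rcases t.eq_empty_or_nonempty with rfl | ⟨q, hq⟩
      · obtain ⟨b, hb⟩ := hP (↑s) (s.finite_toSet)
        obtain ⟨r, hr⟩ := hbd b
        exact ⟨r, fun p hp hrp => hr (hrp.trans (hb hp)), by simp⟩
      · exact absurd (h2 q hq) (by simp)
    set x : K := ⟨fun _ => true, hxmem⟩ with hx
    set Nset : P → Set K := fun p => {g : K | g.1 p = true} with hNset
    have hNopen : ∀ p, IsOpen (Nset p) := by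
      intro p
      have h : Nset p = (fun g : K => g.1 p) ⁻¹' {true} := rfl
      rw [h]
      exact (isOpen_discrete {true}).preimage ((continuous_apply p).comp continuous_subtype_val)
    have hNnhds : ∀ p, Nset p ∈ nhds x :=
      fun p => (hNopen p).mem_nhds rfl
    have hNmono : ∀ {p q : P}, q ≤ p → Nset p ⊆ Nset q :=
      fun {p q} h g hg => kcond_mono g.2 h hg
    -- neighborhood base
    have base : ∀ W ∈ nhds x, ∃ q : P, Nset q ⊆ W := by
      intro W hW
      rw [nhds_induced] at hW
      obtain ⟨V, hV, hVW⟩ := hW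
      rw [nhds_pi] at hV
      obtain ⟨I, hIfin, U, hU, hsub⟩ := Filter.mem_pi.mp hV
      obtain ⟨q, hq⟩ := hP I hIfin
      refine ⟨q, fun g hg => hVW (hsub fun i hi => ?_)⟩
      have : g.1 i = true := kcond_mono g.2 (hq hi) hg
      rw [this]
      exact mem_of_mem_nhds (hU i)
    -- comparison lemma
    have hcomp : ∀ {p q : P}, Nset q ⊆ Nset p → p ≤ q := by
      intro p q h
      by_contra hpq
      have hmem : (⟨principalPt p, kcond_principal p⟩ : K) ∈ Nset q :=
        principalPt_eq_true.mpr hpq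
      have := h hmem
      have h2 : principalPt p p = true := this
      exact principalPt_eq_true.mp h2 le_rfl
    refine ⟨x, ?_, ?_⟩
    · -- TukeyGE P (NbhdPoset x)
      choose ψ hψ using fun W : NbhdPoset x =>
        base (OrderDual.ofDual W).1 (OrderDual.ofDual W).2
      refine ⟨ψ, fun S hS hbdd => hS ?_⟩
      obtain ⟨q₀, hq₀⟩ := hbdd
      refine ⟨OrderDual.toDual ⟨Nset q₀, hNnhds q₀⟩, fun W hW => ?_⟩
      show Nset q₀ ⊆ (OrderDual.ofDual W).1
      have hle : ψ W ≤ q₀ := hq₀ ⟨W, hW, rfl⟩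
      exact (hNmono hle).trans (hψ W)
    · -- TukeyGE (NbhdPoset x) P
      refine ⟨fun p => OrderDual.toDual ⟨Nset p, hNnhds p⟩, fun S hS hbdd => hS ?_⟩
      obtain ⟨B, hB⟩ := hbdd
      obtain ⟨q, hq⟩ := base (OrderDual.ofDual B).1 (OrderDual.ofDual B).2
      refine ⟨q, fun p hp => ?_⟩
      have hW : (OrderDual.ofDual B).1 ⊆ Nset p := hB ⟨p, hp, rfl⟩
      exact hcomp (hq.trans hW)
end

section
/- For every directed set P there exists a Hausdorff topological group G (an abelian group with a topology making the group operations continuous) with identity element e such that P is Tukey equivalent to N_e, the set of all neighborhoods of e in G ordered by reverse inclusion. -/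
open Set Topology Cardinal

universe u

/-!
Take `G = P → A` for a nontrivial abelian group `A` and declare the subgroups
`U p = {f | f = 1 on Iic p}` to be a neighbourhood base of `1`. They shrink as `p` grows
and separate points, so they define a Hausdorff group topology. Moreover `U q ⊆ U p` forces
`p ≤ q`, since `Pi.mulSingle p a` (with `a ≠ 1`) lies in `U q` whenever `p ≰ q`. Thus
`p ↦ U p` preserves and reflects the order and has cofinal image in `N_1`, and such a map is
a Tukey equivalence.
-/

section Tukey

variable {P Q : Type*} [Preorder P] [Preorder Q]

theorem IsTukeyMap.of_le_iff_of_isCofinal {f : P → Q} (hf : ∀ {p q}, f p ≤ f q ↔ p ≤ q)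
    (hcof : IsCofinal (range f)) : IsTukeyMap f := by
  rintro S hS ⟨y, hy⟩
  obtain ⟨q, hyq⟩ := exists_range_iff.1 (hcof y)
  exact hS ⟨q, fun p hp => hf.1 ((hy (mem_image_of_mem f hp)).trans hyq)⟩

theorem IsTukeyMap.of_monotone_of_le_comp {f : P → Q} {g : Q → P} (hf : Monotone f)
    (hfg : ∀ y, y ≤ f (g y)) : IsTukeyMap g := by
  rintro S hS ⟨p, hp⟩
  exact hS ⟨f p, fun y hy => (hfg y).trans (hf (hp (mem_image_of_mem g hy)))⟩

theorem TukeyEquiv.of_le_iff_of_isCofinal {f : P → Q} (hf : ∀ {p q}, f p ≤ f q ↔ p ≤ q)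
    (hcof : IsCofinal (range f)) : TukeyEquiv P Q := by
  choose g hg using fun y => exists_range_iff.1 (hcof y)
  exact ⟨⟨g, .of_monotone_of_le_comp (fun _ _ => hf.2) hg⟩,
    ⟨f, .of_le_iff_of_isCofinal hf hcof⟩⟩

theorem tukeyEquiv_nbhdPoset_of_hasAntitoneBasis {X : Type*} [TopologicalSpace X] {x : X}
    {s : P → Set X} (hs : (𝓝 x).HasAntitoneBasis s)
    (hle : ∀ {p q}, s q ⊆ s p → p ≤ q) :
    TukeyEquiv P (NbhdPoset x) := by
  let f (p : P) : NbhdPoset x := OrderDual.toDual ⟨s p, hs.mem p⟩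
  refine .of_le_iff_of_isCofinal (f := f) ⟨hle, (hs.antitone ·)⟩ fun V => ?_
  obtain ⟨p, hp⟩ := hs.mem_iff.1 V.2
  exact ⟨f p, mem_range_self p, hp⟩

end Tukey

section GroupTopology

variable {G ι : Type*} [CommGroup G] [Preorder ι] [Nonempty ι] [IsDirectedOrder ι]
  {U : ι → Subgroup G}

abbrev Subgroup.groupFilterBasisOfAntitone (hU : Antitone U) : GroupFilterBasis G :=
  groupFilterBasisOfComm (range fun i => (U i : Set G)) (range_nonempty _)
    (by
      rintro _ _ ⟨i, rfl⟩ ⟨j, rfl⟩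
      obtain ⟨k, hik, hjk⟩ := exists_ge_ge i j
      exact ⟨_, mem_range_self k, subset_inter (hU hik) (hU hjk)⟩)
    (by rintro _ ⟨i, rfl⟩; exact (U i).one_mem)
    (by
      rintro _ ⟨i, rfl⟩
      refine ⟨_, mem_range_self i, ?_⟩
      rintro _ ⟨a, ha, b, hb, rfl⟩
      exact (U i).mul_mem ha hb)
    (by rintro _ ⟨i, rfl⟩; exact ⟨_, mem_range_self i, fun a ha => (U i).inv_mem ha⟩)

theorem Subgroup.hasAntitoneBasis_nhds_one (hU : Antitone U) :
    (@nhds G (groupFilterBasisOfAntitone hU).topology 1).HasAntitoneBasis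
      fun i => (U i : Set G) where
  toHasBasis := by
    refine ((groupFilterBasisOfAntitone hU).nhds_one_hasBasis).to_hasBasis ?_ ?_
    · rintro _ ⟨i, rfl⟩
      exact ⟨i, trivial, subset_rfl⟩
    · exact fun i _ => ⟨_, mem_range_self i, subset_rfl⟩
  antitone := hU

theorem Subgroup.t2Space_groupFilterBasisOfAntitone (hU : Antitone U)
    (hsep : ⋂ i, (U i : Set G) ⊆ {1}) :
    @T2Space G (groupFilterBasisOfAntitone hU).topology := by
  let := (groupFilterBasisOfAntitone hU).topology
  rw [GroupFilterBasis.t2Space_iff_sInter_subset _ rfl]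
  exact (sInter_range _).trans_subset hsep

end GroupTopology

section PiIic

variable {P A : Type*} [Preorder P] [CommGroup A]

theorem antitone_pi_Iic_bot :
    Antitone fun p : P => Subgroup.pi (Iic p) fun _ => (⊥ : Subgroup A) :=
  fun _ _ hpq _ hf x hx => hf x (le_trans hx hpq)

theorem iInter_pi_Iic_bot_subset :
    ⋂ p : P, ((Subgroup.pi (Iic p) fun _ => (⊥ : Subgroup A)) : Set (P → A)) ⊆ {1} := by
  intro f hf
  funext x
  exact (mem_iInter.1 hf x) x le_rfl

theorem le_of_pi_Iic_bot_le [Nontrivial A] {p q : P}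
    (h : (Subgroup.pi (Iic q) fun _ => (⊥ : Subgroup A)) ≤ Subgroup.pi (Iic p) fun _ => ⊥) :
    p ≤ q := by
  classical
  by_contra hpq
  obtain ⟨a, ha⟩ := exists_ne (1 : A)
  have hmem (r : P) := Subgroup.mulSingle_mem_pi (f := fun _ : P => A) (I := Iic r)
    (H := fun _ => ⊥) p a
  have hq : Pi.mulSingle p a ∈ Subgroup.pi (Iic q) fun _ => (⊥ : Subgroup A) :=
    (hmem q).2 fun hp => absurd hp hpq
  exact ha (Subgroup.mem_bot.1 ((hmem p).1 (h hq) le_rfl))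

end PiIic

theorem isDirectedOrder_of_forall_finite_bddAbove {P : Type*} [Preorder P]
    (hP : ∀ S : Set P, S.Finite → BddAbove S) : IsDirectedOrder P where
  directed p q := by
    obtain ⟨r, hr⟩ := hP {p, q} (toFinite _)
    exact ⟨r, hr (mem_insert p _), hr (mem_insert_of_mem p rfl)⟩

/-- Every directed set is Tukey equivalent to the neighborhood filter of the identity
of a Hausdorff (abelian) topological group. -/
theorem stmt2 {P : Type u} [Preorder P]
    (hP : ∀ S : Set P, S.Finite → BddAbove S) :
    ∃ (G : Type u) (t : TopologicalSpace G) (g : CommGroup G),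
      letI := t
      letI := g
      IsTopologicalGroup G ∧ T2Space G ∧ TukeyEquiv P (NbhdPoset (1 : G)) := by
  have : Nonempty P := (hP ∅ finite_empty).nonempty
  have : IsDirectedOrder P := isDirectedOrder_of_forall_finite_bddAbove hP
  have hU := antitone_pi_Iic_bot (P := P) (A := Multiplicative (ZMod 2))
  let B := Subgroup.groupFilterBasisOfAntitone hU
  -- shadows the product topology that `P → Multiplicative (ZMod 2)` already carries
  let := B.topology
  exact ⟨_, B.topology, inferInstance, B.isTopologicalGroup,
    Subgroup.t2Space_groupFilterBasisOfAntitone hU iInter_pi_Iic_bot_subset,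
    tukeyEquiv_nbhdPoset_of_hasAntitoneBasis (Subgroup.hasAntitoneBasis_nhds_one hU)
      (le_of_pi_Iic_bot_le (A := Multiplicative (ZMod 2)))⟩
end

section
/- For every directed set P there exists a locally convex Hausdorff topological vector space L over the real numbers (a real vector space with a topology making addition and scalar multiplication continuous, in which 0 has a neighborhood base of convex sets) such that P × ℕ (with the product order, ℕ carrying its usual order) is Tukey equivalent to N_0, the set of all neighborhoods of 0 in L ordered by reverse inclusion. -/
open Set Topology Cardinal

universe u

/-!
Take `L = P →₀ ℝ` with the seminorms `q_p f = ∑_{x ≤ p} |f x|`. As `P` is directed, the balls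
`{q_p < 1/(n+1)}` form a base at `0`, and testing on point masses shows that the ball of
`(p', n')` lies in the ball of `(p, n)` exactly when `(p, n) ≤ (p', n')`. A cofinal order
embedding of `P × ℕ` into `N_0` is a Tukey equivalence.
-/

section Tukey

variable {Q P : Type*} [Preorder Q] [Preorder P] {f : Q → P}

theorem isTukeyMap_of_le_iff_of_cofinal (hf : ∀ a b, f a ≤ f b ↔ a ≤ b)
    (hcof : ∀ p, ∃ q, p ≤ f q) : IsTukeyMap f := by
  rintro S hS ⟨p, hp⟩
  obtain ⟨q, hpq⟩ := hcof p
  exact hS ⟨q, fun a ha => (hf a q).mp ((hp (mem_image_of_mem f ha)).trans hpq)⟩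

theorem tukeyGE_of_monotone_of_cofinal (hf : Monotone f) (hcof : ∀ p, ∃ q, p ≤ f q) :
    TukeyGE Q P := by
  choose g hg using hcof
  refine ⟨g, fun S hS ⟨q, hq⟩ => hS ⟨f q, fun p hp => ?_⟩⟩
  exact (hg p).trans (hf (hq (mem_image_of_mem g hp)))

theorem tukeyEquiv_of_le_iff_of_cofinal (hf : ∀ a b, f a ≤ f b ↔ a ≤ b)
    (hcof : ∀ p, ∃ q, p ≤ f q) : TukeyEquiv Q P :=
  ⟨tukeyGE_of_monotone_of_cofinal (fun a b h => (hf a b).mpr h) hcof,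
    f, isTukeyMap_of_le_iff_of_cofinal hf hcof⟩

theorem tukeyEquiv_nbhdPoset_of_hasBasis {ι X : Type*} [Preorder ι] [TopologicalSpace X] {x : X}
    {U : ι → Set X} (hU : (𝓝 x).HasBasis (fun _ => True) U)
    (hUle : ∀ i j, U j ⊆ U i ↔ i ≤ j) :
    TukeyEquiv ι (NbhdPoset x) := by
  refine tukeyEquiv_of_le_iff_of_cofinal
    (f := fun i => OrderDual.toDual ⟨U i, hU.mem_of_mem trivial⟩) hUle fun W => ?_
  obtain ⟨i, -, hi⟩ := hU.mem_iff.mp (OrderDual.ofDual W).2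
  exact ⟨i, hi⟩

end Tukey

theorem WithSeminorms.hasBasis_ball_inv_nat_succ {𝕜 E ι : Type*} [NormedField 𝕜]
    [AddCommGroup E] [Module 𝕜 E] [TopologicalSpace E] [Nonempty ι] [Preorder ι]
    [IsDirectedOrder ι] {q : SeminormFamily 𝕜 E ι} (hq : WithSeminorms q) (hmono : Monotone q) :
    (𝓝 (0 : E)).HasBasis (fun _ : ι × ℕ => True) fun i => (q i.1).ball 0 (i.2 + 1)⁻¹ := by
  refine hq.hasBasis_zero_ball.to_hasBasis (fun ⟨s, r⟩ hr => ?_) fun ⟨i, n⟩ _ =>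
    ⟨({i}, (n + 1)⁻¹), by positivity, by rw [Finset.sup_singleton]⟩
  obtain ⟨i, hi⟩ := s.exists_le
  obtain ⟨n, hn⟩ := exists_nat_one_div_lt hr
  refine ⟨(i, n), trivial, ?_⟩
  calc (q i).ball 0 (n + 1)⁻¹ ⊆ (s.sup q).ball 0 (n + 1)⁻¹ :=
        Seminorm.ball_antitone (Finset.sup_le fun j hj => hmono (hi j hj))
    _ ⊆ (s.sup q).ball 0 r := Seminorm.ball_mono (by simpa using hn.le)

section WeightedL1

variable {ι : Type*}

noncomputable def weightedL1Seminorm (w : ι → ℝ) (hw : 0 ≤ w) : Seminorm ℝ (ι →₀ ℝ) :=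
  Seminorm.of (fun f => f.sum fun i c => w i * |c|)
    (fun f g => by
      classical
      have hsum : ∀ h : ι →₀ ℝ, h.support ⊆ f.support ∪ g.support →
          h.sum (fun i c => w i * |c|) = ∑ i ∈ f.support ∪ g.support, w i * |h i| :=
        fun h hh => Finsupp.sum_of_support_subset h hh _ fun _ _ => by simp
      rw [hsum _ Finsupp.support_add, hsum f Finset.subset_union_left,
        hsum g Finset.subset_union_right, ← Finset.sum_add_distrib]
      refine Finset.sum_le_sum fun i _ => ?_
      rw [← mul_add]
      exact mul_le_mul_of_nonneg_left (abs_add_le _ _) (hw i))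
    (fun a f => by
      rw [Finsupp.sum_smul_index' fun _ => by simp, Finsupp.mul_sum]
      simp only [smul_eq_mul, abs_mul, Real.norm_eq_abs]
      exact Finset.sum_congr rfl fun _ _ => by ring)

variable {w w' : ι → ℝ} {hw : 0 ≤ w} {hw' : 0 ≤ w'}

theorem weightedL1Seminorm_apply (f : ι →₀ ℝ) :
    weightedL1Seminorm w hw f = f.sum fun i c => w i * |c| := rfl

theorem weightedL1Seminorm_single (i : ι) (c : ℝ) :
    weightedL1Seminorm w hw (Finsupp.single i c) = w i * |c| := by
  simp [weightedL1Seminorm_apply]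

theorem weightedL1Seminorm_mono (h : w ≤ w') :
    weightedL1Seminorm w hw ≤ weightedL1Seminorm w' hw' :=
  fun _ => Finset.sum_le_sum fun i _ => mul_le_mul_of_nonneg_right (h i) (abs_nonneg _)

theorem mul_abs_apply_le_weightedL1Seminorm (f : ι →₀ ℝ) (i : ι) :
    w i * |f i| ≤ weightedL1Seminorm w hw f := by
  classical
  rw [weightedL1Seminorm_apply, Finsupp.sum_of_support_subset f (Finset.subset_insert i _) _
    fun _ _ => by simp]
  exact Finset.single_le_sum (fun j _ => mul_nonneg (hw j) (abs_nonneg _))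
    (Finset.mem_insert_self _ _)

end WeightedL1

section LowerSetSeminorms

variable (P : Type*) [Preorder P]

noncomputable def lowerSetSeminorms : SeminormFamily ℝ (P →₀ ℝ) P := fun p =>
  weightedL1Seminorm ((Iic p).indicator 1) (indicator_nonneg fun _ _ => zero_le_one)

variable {P}

theorem lowerSetSeminorms_mono : Monotone (lowerSetSeminorms P) := fun _ _ h =>
  weightedL1Seminorm_mono (indicator_le_indicator_of_subset (Iic_subset_Iic.mpr h)
    fun _ => zero_le_one)

open Classical in
theorem lowerSetSeminorms_single (p a : P) (c : ℝ) :
    lowerSetSeminorms P p (Finsupp.single a c) = if a ≤ p then |c| else 0 := by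
  simp [lowerSetSeminorms, weightedL1Seminorm_single, indicator_apply]

theorem lowerSetSeminorms_separating (f : P →₀ ℝ) (hf : f ≠ 0) :
    ∃ p, lowerSetSeminorms P p f ≠ 0 := by
  obtain ⟨p, hp⟩ := Finsupp.support_nonempty_iff.mpr hf
  refine ⟨p, (lt_of_lt_of_le ?_ (mul_abs_apply_le_weightedL1Seminorm f p)).ne'⟩
  simpa using Finsupp.mem_support_iff.mp hp

theorem lowerSetSeminorms_ball_subset_ball_iff {p p' : P} {r r' : ℝ} (hr : 0 < r)
    (hr' : 0 < r') :
    (lowerSetSeminorms P p').ball 0 r' ⊆ (lowerSetSeminorms P p).ball 0 r ↔ p ≤ p' ∧ r' ≤ r := by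
  constructor
  · intro h
    have hnot : Finsupp.single p r ∉ (lowerSetSeminorms P p').ball 0 r' := fun hmem => by
      have := h hmem
      rw [Seminorm.mem_ball_zero, lowerSetSeminorms_single, if_pos le_rfl, abs_of_pos hr] at this
      exact lt_irrefl r this
    rw [Seminorm.mem_ball_zero, lowerSetSeminorms_single, not_lt] at hnot
    by_cases hpp' : p ≤ p'
    · rw [if_pos hpp', abs_of_pos hr] at hnot
      exact ⟨hpp', hnot⟩
    · rw [if_neg hpp'] at hnot
      exact absurd hr' hnot.not_gt
  · rintro ⟨hpp', hrr'⟩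
    exact (Seminorm.ball_antitone (lowerSetSeminorms_mono hpp')).trans (Seminorm.ball_mono hrr')

end LowerSetSeminorms

/-- For every directed set `P`, `P × ℕ` is Tukey equivalent to the neighborhood filter
of `0` in some locally convex Hausdorff real topological vector space. -/
theorem stmt3 {P : Type u} [Preorder P]
    (hP : ∀ S : Set P, S.Finite → BddAbove S) :
    ∃ (L : Type u) (t : TopologicalSpace L) (a : AddCommGroup L),
      letI := t
      letI := a
      ∃ m : Module ℝ L,
        letI := m
        IsTopologicalAddGroup L ∧ ContinuousSMul ℝ L ∧ LocallyConvexSpace ℝ L ∧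
          T2Space L ∧ TukeyEquiv (P × ℕ) (NbhdPoset (0 : L)) := by
  have : Nonempty P := ⟨(hP ∅ finite_empty).choose⟩
  have : IsDirectedOrder P := ⟨fun a b =>
    let ⟨c, hc⟩ := hP {a, b} (toFinite _)
    ⟨c, hc (mem_insert a _), hc (mem_insert_of_mem a rfl)⟩⟩
  let _ : TopologicalSpace (P →₀ ℝ) := (lowerSetSeminorms P).moduleFilterBasis.topology
  have hq : WithSeminorms (lowerSetSeminorms P) := ⟨rfl⟩
  have htop : IsTopologicalAddGroup (P →₀ ℝ) := hq.topologicalAddGroup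
  have : T1Space (P →₀ ℝ) := hq.T1_of_separating lowerSetSeminorms_separating
  refine ⟨P →₀ ℝ, _, _, _, htop, hq.continuousSMul, hq.toLocallyConvexSpace, inferInstance,
    tukeyEquiv_nbhdPoset_of_hasBasis (hq.hasBasis_ball_inv_nat_succ lowerSetSeminorms_mono)
      fun ⟨p, n⟩ ⟨p', n'⟩ => ?_⟩
  rw [lowerSetSeminorms_ball_subset_ball_iff (by positivity) (by positivity), Prod.mk_le_mk,
    inv_le_inv₀ (by positivity) (by positivity)]
  simp only [add_le_add_iff_right, Nat.cast_le]
end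

section
/- For every directed set P there exists a completely regular Hausdorff topological space Y such that P is Tukey equivalent to N_Δ, the set of all neighborhoods of the diagonal in Y × Y ordered by reverse inclusion. -/
open Set Topology Cardinal

universe u

/-- The poset of all neighborhoods of the diagonal in `X × X`,
ordered by reverse inclusion. -/
abbrev DiagNbhdPoset (X : Type*) [TopologicalSpace X] :=
  ({U : Set (X × X) // U ∈ nhdsSet (Set.diagonal X)})ᵒᵈ

/-!
If `P` has a largest element, a one-point space works: both sides have a maximum.
Otherwise adjoin a point `∞ = none` to `P`, keep the points of `P` isolated and let the
neighbourhoods of `∞` be generated by the tails `T p = {∞} ∪ [p, ∞)`. Every neighbourhood of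
the only non-isolated point is clopen, so the space is zero-dimensional, and it is `T₁` because
`P` has no top. A neighbourhood of the diagonal is the diagonal together with a neighbourhood
of `(∞, ∞)`, i.e. it contains some `T p ×ˢ T p`. Hence `p ↦ Δ ∪ T p ×ˢ T p` and
`U ↦ some p with T p ×ˢ T p ⊆ U` are Tukey maps; for the first, if `U ⊆ Δ ∪ T p ×ˢ T p`
contains `T q ×ˢ T q`, then the off-diagonal pair `(∞, q)` forces `p ≤ q`.
-/

open Filter

theorem IsTukeyMap.of_le_imp_le {Q P : Type*} [Preorder Q] [Preorder P] {ψ : Q → P}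
    (g : P → Q) (hψ : ∀ q p, ψ q ≤ p → q ≤ g p) : IsTukeyMap ψ :=
  fun _ hS ⟨b, hb⟩ ↦ hS ⟨g b, fun q hq ↦ hψ q b (hb ⟨q, hq, rfl⟩)⟩

theorem TukeyEquiv.of_le_imp_le {P Q : Type*} [Preorder P] [Preorder Q]
    (f : P → Q) (g : Q → P) (hf : ∀ p q, f p ≤ q → p ≤ g q)
    (hg : ∀ q p, g q ≤ p → q ≤ f p) : TukeyEquiv P Q :=
  ⟨⟨g, .of_le_imp_le f hg⟩, ⟨f, .of_le_imp_le g hf⟩⟩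

theorem TukeyEquiv.of_bddAbove_univ {P Q : Type*} [Preorder P] [Preorder Q]
    (hP : BddAbove (univ : Set P)) (hQ : BddAbove (univ : Set Q)) : TukeyEquiv P Q :=
  let ⟨p, hp⟩ := hP
  let ⟨q, hq⟩ := hQ
  .of_le_imp_le (fun _ ↦ q) (fun _ ↦ p) (fun p' _ _ ↦ hp (mem_univ p'))
    (fun q' _ _ ↦ hq (mem_univ q'))

theorem bddAbove_univ_diagNbhdPoset (X : Type*) [TopologicalSpace X] [DiscreteTopology X] :
    BddAbove (univ : Set (DiagNbhdPoset X)) :=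
  ⟨OrderDual.toDual ⟨diagonal X, (isOpen_discrete _).mem_nhdsSet.2 subset_rfl⟩,
    fun U _ ↦ subset_of_mem_nhdsSet (OrderDual.ofDual U).2⟩

section IsolatedPoints

variable {X : Type*} [TopologicalSpace X] {a : X}

theorem isClopen_of_mem_nhds_of_isolated (h : ∀ x ≠ a, 𝓝 x = pure x) {s : Set X}
    (hs : s ∈ 𝓝 a) : IsClopen s := by
  refine ⟨isOpen_compl_iff.1 <| isOpen_iff_mem_nhds.2 fun x hx ↦ ?_,
    isOpen_iff_mem_nhds.2 fun x hx ↦ ?_⟩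
  · rw [h x fun hxa ↦ hx (hxa ▸ mem_of_mem_nhds hs)]
    exact hx
  · by_cases hxa : x = a
    · exact hxa ▸ hs
    · rw [h x hxa]
      exact hx

theorem completelyRegularSpace_of_isolated [T1Space X] (h : ∀ x ≠ a, 𝓝 x = pure x) :
    CompletelyRegularSpace X := by
  refine .of_isTopologicalBasis_clopens <| TopologicalSpace.isTopologicalBasis_of_isOpen_of_nhds
    (fun _ hs ↦ hs.isOpen) fun x s hx hs ↦ ?_
  by_cases hxa : x = a
  · subst hxa
    exact ⟨s, isClopen_of_mem_nhds_of_isolated h (hs.mem_nhds hx), hx, subset_rfl⟩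
  · exact ⟨{x}, ⟨isClosed_singleton, isOpen_singleton_iff_nhds_eq_pure x |>.2 (h x hxa)⟩,
      rfl, singleton_subset_iff.2 hx⟩

theorem mem_nhdsSet_diagonal_iff_of_isolated (h : ∀ x ≠ a, 𝓝 x = pure x)
    {U : Set (X × X)} : U ∈ 𝓝ˢ (diagonal X) ↔ diagonal X ⊆ U ∧ U ∈ 𝓝 (a, a) := by
  rw [mem_nhdsSet_iff_forall]
  refine ⟨fun hU ↦ ⟨fun z hz ↦ mem_of_mem_nhds (hU z hz), hU (a, a) rfl⟩, ?_⟩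
  rintro ⟨hΔ, ha⟩ ⟨x, y⟩ (rfl : x = y)
  by_cases hxa : x = a
  · exact hxa ▸ ha
  · rw [nhds_prod_eq, h x hxa, prod_pure_pure]
    exact hΔ rfl

end IsolatedPoints

theorem t1Space_nhdsAdjoint {α : Type*} {a : α} {f : Filter α}
    (h : ∀ b ≠ a, ∀ᶠ x in f, x ≠ b) : @T1Space α (nhdsAdjoint a f) :=
  letI := nhdsAdjoint a f
  ⟨fun b ↦ isOpen_compl_iff.1 fun hab ↦ h b (Ne.symm hab)⟩

section TailTopology

variable (P : Type*) [Preorder P]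

abbrev tailTopology : TopologicalSpace (Option P) := nhdsAdjoint none (map some atTop)

attribute [local instance] tailTopology

variable {P}

def tailNbhd (p : P) : Set (Option P) := insert none (some '' Ici p)

@[simp]
theorem none_mem_tailNbhd (p : P) : none ∈ tailNbhd p := mem_insert _ _

@[simp]
theorem some_mem_tailNbhd {p q : P} : some q ∈ tailNbhd p ↔ p ≤ q := by
  simp [tailNbhd]

theorem tailNbhd_anti : Antitone (tailNbhd (P := P)) := fun _ _ hpq ↦
  insert_subset_insert (image_mono (Ici_subset_Ici.2 hpq))

theorem nhds_tail_of_ne_none : ∀ x ≠ (none : Option P), 𝓝 x = pure x :=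
  fun _ ↦ nhds_nhdsAdjoint_of_ne _

theorem hasBasis_nhds_none_tail [Nonempty P] [IsDirectedOrder P] :
    (𝓝 (none : Option P)).HasBasis (fun _ ↦ True) tailNbhd := by
  rw [show 𝓝 (none : Option P) = _ from nhds_nhdsAdjoint_same _ _, sup_comm]
  convert ((atTop_basis (α := P)).map some).sup_pure none using 2 with p
  rw [tailNbhd, union_singleton]

instance t1Space_tailTopology [NoTopOrder P] : T1Space (Option P) :=
  t1Space_nhdsAdjoint fun b hb ↦ by
    obtain ⟨q, rfl⟩ := Option.ne_none_iff_exists'.1 hb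
    exact (eventually_ne_atTop q).mono fun _ ↦ mt Option.some_inj.1

instance completelyRegularSpace_tailTopology [NoTopOrder P] :
    CompletelyRegularSpace (Option P) :=
  completelyRegularSpace_of_isolated nhds_tail_of_ne_none

theorem mem_nhdsSet_diagonal_tail_iff [Nonempty P] [IsDirectedOrder P]
    {U : Set (Option P × Option P)} :
    U ∈ 𝓝ˢ (diagonal (Option P)) ↔
      diagonal (Option P) ⊆ U ∧ ∃ p, tailNbhd p ×ˢ tailNbhd p ⊆ U := by
  rw [mem_nhdsSet_diagonal_iff_of_isolated nhds_tail_of_ne_none, nhds_prod_eq,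
    hasBasis_nhds_none_tail.prod_self.mem_iff]
  simp only [true_and]

theorem tukeyEquiv_diagNbhdPoset_tail [Nonempty P] [IsDirectedOrder P] :
    TukeyEquiv P (DiagNbhdPoset (Option P)) := by
  choose g hg using fun U : DiagNbhdPoset (Option P) ↦
    (mem_nhdsSet_diagonal_tail_iff.1 (OrderDual.ofDual U).2).2
  let f (p : P) : DiagNbhdPoset (Option P) := OrderDual.toDual
    ⟨diagonal _ ∪ tailNbhd p ×ˢ tailNbhd p,
      mem_nhdsSet_diagonal_tail_iff.2 ⟨subset_union_left, p, subset_union_right⟩⟩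
  refine .of_le_imp_le f g (fun p U hpU ↦ ?_) fun U p hUp ↦ ?_
  · have hU : (none, some (g U)) ∈ tailNbhd (g U) ×ˢ tailNbhd (g U) :=
      ⟨none_mem_tailNbhd _, some_mem_tailNbhd.2 le_rfl⟩
    have hUp : (none, some (g U)) ∈ diagonal _ ∪ tailNbhd p ×ˢ tailNbhd p := hpU (hg U hU)
    simpa using hUp
  · exact union_subset (mem_nhdsSet_diagonal_tail_iff.1 (OrderDual.ofDual U).2).1 <|
      (prod_mono (tailNbhd_anti hUp) (tailNbhd_anti hUp)).trans (hg U)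

end TailTopology

/-- Every directed set is Tukey equivalent to the filter of neighborhoods of the
diagonal of some completely regular Hausdorff space. -/
theorem stmt4 {P : Type u} [Preorder P]
    (hP : ∀ S : Set P, S.Finite → BddAbove S) :
    ∃ (Y : Type u) (t : TopologicalSpace Y),
      letI := t
      CompletelyRegularSpace Y ∧ T2Space Y ∧ TukeyEquiv P (DiagNbhdPoset Y) := by
  have : IsDirectedOrder P := ⟨fun p q ↦
    let ⟨r, hr⟩ := hP {p, q} (toFinite _)
    ⟨r, hr (by simp), hr (by simp)⟩⟩
  have : Nonempty P := let ⟨p, _⟩ := hP ∅ finite_empty; ⟨p⟩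
  by_cases hbdd : BddAbove (univ : Set P)
  · exact ⟨PUnit, inferInstance, inferInstance, inferInstance,
      .of_bddAbove_univ hbdd (bddAbove_univ_diagNbhdPoset PUnit)⟩
  · have : NoTopOrder P := ⟨by simpa [BddAbove, upperBounds, Set.Nonempty] using hbdd⟩
    exact ⟨Option P, tailTopology P, inferInstance, inferInstance,
      tukeyEquiv_diagNbhdPoset_tail⟩
end

section
/- For a directed set Q the following are equivalent: (i) there exists a directed set P such that Q is Tukey equivalent to P × ℕ (product order, ℕ with its usual order); (ii) Q ≥_T ℕ; (iii) Q is not countably directed, i.e. there exists a countable subset of Q with no upper bound in Q. -/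
open Set Topology Cardinal

universe u

/-- For a directed set `Q` the following are equivalent:
(i) `Q =_T P × ℕ` for some directed set `P`;
(ii) `Q ≥_T ℕ`;
(iii) `Q` is not countably directed. -/
theorem stmt5 {Q : Type u} [Preorder Q]
    (hQ : ∀ S : Set Q, S.Finite → BddAbove S) :
    ((∃ (P : Type u) (p : Preorder P),
        letI := p
        (∀ S : Set P, S.Finite → BddAbove S) ∧ TukeyEquiv Q (P × ℕ)) ↔
      TukeyGE Q ℕ) ∧
    (TukeyGE Q ℕ ↔ ∃ C : Set Q, C.Countable ∧ ¬ BddAbove C) := by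
  constructor
  · constructor
    · -- (i) → (ii)
      rintro ⟨P, p, hP, ⟨ψ, hψ⟩, -⟩
      obtain ⟨p0, -⟩ := hP ∅ finite_empty
      refine ⟨fun n => ψ (p0, n), ?_⟩
      intro S hS hb
      -- first: (fun n => (p0, n)) '' S is unbounded in P × ℕ
      have hχ : ¬ BddAbove ((fun n => ((p0, n) : P × ℕ)) '' S) := by
        rintro ⟨⟨b1, b2⟩, hb'⟩
        apply hS
        refine ⟨b2, fun n hn => ?_⟩
        have := hb' ⟨n, hn, rfl⟩
        exact this.2
      apply hψ _ hχ
      rwa [← image_comp] at *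
    · -- (ii) → (i)
      rintro ⟨g, hg⟩
      refine ⟨Q, inferInstance, hQ, ?_, ?_⟩
      · -- TukeyGE Q (Q × ℕ)
        have hub : ∀ (q : Q) (n : ℕ), ∃ r, q ≤ r ∧ g n ≤ r := by
          intro q n
          obtain ⟨r, hr⟩ := hQ {q, g n} (by simp)
          exact ⟨r, hr (by simp), hr (by simp)⟩
        choose φ h1 h2 using hub
        refine ⟨fun x => φ x.1 x.2, ?_⟩
        intro S hS
        rintro ⟨b, hb⟩
        -- snd '' S must be bounded in ℕ
        have hsnd : BddAbove (Prod.snd '' S) := by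
          by_contra h
          apply hg _ h
          refine ⟨b, ?_⟩
          rintro y ⟨n, ⟨x, hx, rfl⟩, rfl⟩
          exact le_trans (h2 x.1 x.2) (hb ⟨x, hx, rfl⟩)
        obtain ⟨m, hm⟩ := hsnd
        apply hS
        refine ⟨(b, m), fun x hx => ?_⟩
        refine Prod.le_def.mpr ⟨le_trans (h1 x.1 x.2) (hb ⟨x, hx, rfl⟩), ?_⟩
        exact hm ⟨x, hx, rfl⟩
      · -- TukeyGE (Q × ℕ) Q
        refine ⟨fun q => (q, 0), ?_⟩
        intro S hS
        rintro ⟨⟨b1, b2⟩, hb⟩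
        apply hS
        refine ⟨b1, fun q hq => ?_⟩
        exact (hb ⟨q, hq, rfl⟩).1
  · constructor
    · rintro ⟨ψ, hψ⟩
      refine ⟨range ψ, countable_range ψ, ?_⟩
      have := hψ univ (not_bddAbove_univ)
      rwa [image_univ] at this
    · rintro ⟨C, hC, hCub⟩
      have hQne : Nonempty Q := by
        obtain ⟨b, -⟩ := hQ ∅ finite_empty
        exact ⟨b⟩
      have hCne : C.Nonempty := by
        rcases C.eq_empty_or_nonempty with h | h
        · exact absurd (h ▸ bddAbove_empty) hCub
        · exact h
      obtain ⟨f, rfl⟩ := Set.Countable.exists_eq_range hC hCne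
      have hgex : ∀ n : ℕ, ∃ q, ∀ k ≤ n, f k ≤ q := by
        intro n
        obtain ⟨q, hq⟩ := hQ (f '' Set.Iic n) ((Set.finite_Iic n).image f)
        exact ⟨q, fun k hk => hq ⟨k, hk, rfl⟩⟩
      choose g hgub using hgex
      refine ⟨g, ?_⟩
      intro S hS
      rintro ⟨b, hb⟩
      apply hCub
      refine ⟨b, ?_⟩
      rintro c ⟨k, rfl⟩
      obtain ⟨n, hnS, hkn⟩ := not_bddAbove_iff.mp hS k
      exact le_trans (hgub n k hkn.le) (hb ⟨n, hnS, rfl⟩)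
end

section
/- Let κ be an infinite cardinal and let Q be a directed set carrying a Hausdorff topology such that: Q is locally compact; every closed discrete subset of Q has cardinality at most κ; and every compact subset of Q has an upper bound in Q. Then Q has calibre (κ⁺, ω), where κ⁺ is the successor cardinal of κ. -/
open Set Topology Cardinal

universe u

/-- A directed set `P` has calibre `(μ, ω)` if every subset of cardinality `μ`
has an infinite subset with an upper bound. -/
def Calibre (P : Type u) [Preorder P] (μ : Cardinal.{u}) : Prop :=
  ∀ S : Set P, #S = μ → ∃ T ⊆ S, T.Infinite ∧ BddAbove T

/-!
A set of size `κ⁺` cannot be closed discrete, so it has an accumulation point `x`. The trace of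
the set on a compact neighbourhood of `x` still accumulates at `x`, hence is infinite (points are
closed), and it is bounded because the compact neighbourhood is.
-/

open Filter

variable {X : Type*} [TopologicalSpace X]

theorem accPt_principal_iff_not_disjoint {x : X} {S : Set X} :
    AccPt x (𝓟 S) ↔ ¬Disjoint (𝓝[≠] x) (𝓟 S) := by
  rw [AccPt, Filter.neBot_iff, Ne, disjoint_iff]

theorem exists_accPt_of_not_isClosed_and_isDiscrete {S : Set X}
    (hS : ¬(IsClosed S ∧ IsDiscrete S)) : ∃ x, AccPt x (𝓟 S) := by
  simpa only [isClosed_and_discrete_iff, not_forall, accPt_principal_iff_not_disjoint] using hS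

theorem Set.Finite.not_accPt [T1Space X] {S : Set X} (hS : S.Finite) (x : X) :
    ¬AccPt x (𝓟 S) :=
  accPt_principal_iff_not_disjoint.not_left.mpr
    (isClosed_and_discrete_iff.mp ⟨hS.isClosed, hS.isDiscrete⟩ x)

theorem AccPt.infinite [T1Space X] {x : X} {S : Set X} (h : AccPt x (𝓟 S)) : S.Infinite :=
  fun hS ↦ hS.not_accPt x h

theorem AccPt.exists_infinite_bddAbove_subset [Preorder X] [T1Space X]
    [WeaklyLocallyCompactSpace X]
    (hbdd : ∀ K : Set X, IsCompact K → BddAbove K) {x : X} {S : Set X} (h : AccPt x (𝓟 S)) :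
    ∃ T ⊆ S, T.Infinite ∧ BddAbove T := by
  obtain ⟨K, hK, hKx⟩ := exists_compact_mem_nhds x
  have hKS : AccPt x (𝓟 (K ∩ S)) := h.nhds_inter hKx
  exact ⟨K ∩ S, inter_subset_right, hKS.infinite, (hbdd K hK).mono inter_subset_left⟩

theorem stmt7_general {Q : Type u} [Preorder Q] [TopologicalSpace Q] [T2Space Q]
    [LocallyCompactSpace Q]
    (κ : Cardinal.{u})
    (hext : ∀ S : Set Q, IsClosed S → DiscreteTopology S → #S ≤ κ)
    (hKSB : ∀ K : Set Q, IsCompact K → BddAbove K) :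
    Calibre Q (Order.succ κ) := by
  intro S hS
  have hnot : ¬(IsClosed S ∧ IsDiscrete S) := fun ⟨hcl, hdisc⟩ ↦
    (Order.lt_succ κ).not_ge (hS ▸ hext S hcl (isDiscrete_iff_discreteTopology.mp hdisc))
  obtain ⟨x, hx⟩ := exists_accPt_of_not_isClosed_and_isDiscrete hnot
  exact hx.exists_infinite_bddAbove_subset hKSB

/-- A locally compact Hausdorff directed set with extent at most `κ` in which every
compact set is bounded has calibre `(κ⁺, ω)`. -/
theorem stmt7 {Q : Type u} [Preorder Q] [TopologicalSpace Q] [T2Space Q]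
    [LocallyCompactSpace Q]
    (hdir : ∀ S : Set Q, S.Finite → BddAbove S)
    (κ : Cardinal.{u}) (hκ : ℵ₀ ≤ κ)
    (hext : ∀ S : Set Q, IsClosed S → DiscreteTopology S → #S ≤ κ)
    (hKSB : ∀ K : Set Q, IsCompact K → BddAbove K) :
    Calibre Q (Order.succ κ) :=
  stmt7_general κ hext hKSB
end

section
/- Let κ be an infinite cardinal and X a topological space such that every subset of X of cardinality κ⁺ (the successor cardinal of κ) has an infinite subset whose closure in X is compact. Then every closed discrete subset of X has cardinality at most κ. -/
open Set Topology Cardinal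

universe u

theorem Set.Finite.of_subset_of_isCompact_closure {X : Type*} [TopologicalSpace X]
    {S T : Set X} (hSc : IsClosed S) (hSd : DiscreteTopology S) (hTS : T ⊆ S)
    (hT : IsCompact (closure T)) : T.Finite :=
  have : DiscreteTopology (closure T) :=
    DiscreteTopology.of_subset hSd (hSc.closure_subset_iff.mpr hTS)
  (hT.finite (isDiscrete_iff_discreteTopology.mpr this)).subset subset_closure

theorem stmt9_general {X : Type u} [TopologicalSpace X]
    (κ : Cardinal.{u})
    (h : ∀ S : Set X, #S = Order.succ κ →
      ∃ T ⊆ S, T.Infinite ∧ IsCompact (closure T)) :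
    ∀ S : Set X, IsClosed S → DiscreteTopology S → #S ≤ κ := by
  intro S hSc hSd
  by_contra! hlt
  obtain ⟨S', hS'S, hS'card⟩ := le_mk_iff_exists_subset.mp (Order.succ_le_of_lt hlt)
  obtain ⟨T, hTS', hTinf, hTcomp⟩ := h S' hS'card
  exact hTinf (.of_subset_of_isCompact_closure hSc hSd (hTS'.trans hS'S) hTcomp)

/-- If every `κ⁺`-sized subset of `X` has an infinite subset with compact closure,
then every closed discrete subset of `X` has cardinality at most `κ`. -/
theorem stmt9 {X : Type u} [TopologicalSpace X]
    (κ : Cardinal.{u}) (hκ : ℵ₀ ≤ κ)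
    (h : ∀ S : Set X, #S = Order.succ κ →
      ∃ T ⊆ S, T.Infinite ∧ IsCompact (closure T)) :
    ∀ S : Set X, IsClosed S → DiscreteTopology S → #S ≤ κ :=
  stmt9_general κ h
end

section
/- Let X be a uniform space whose uniformity is totally bounded (i.e. the whole space X is a totally bounded set: for every entourage U there is a finite set F ⊆ X with X = ⋃_{x∈F} U[x], where U[x] = {y : (x,y) ∈ U}). Let κ be the least cardinality of a filter basis of the uniformity of X. Then the entourage poset of X is Tukey equivalent to [κ]^{<ω}. -/
open Set Topology Cardinal

universe u

/-- The poset of entourages of a uniform space, ordered by reverse inclusion. -/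
abbrev EntouragePoset (X : Type*) [UniformSpace X] :=
  ({U : Set (X × X) // U ∈ uniformity X})ᵒᵈ

/-!
The map sending an entourage to (the index of) a basis element inside it shows
`[κ]^{<ω} ≥_T` entourages. Conversely it suffices to find `κ` entourages such that no infinite
subfamily has an entourage below all of its members.

Total boundedness enters through finite nets: if `t` is a finite `N`-net for a symmetric
entourage `N`, then two relations absorbing `N` on both sides are compared by their traces on
`t × t`, and there are only finitely many traces. So a totally bounded uniformity closed under
countable intersections has a least entourage, since a strictly decreasing sequence of transitive
entourages would have pairwise distinct traces on a net of their intersection. When `κ > 1` there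
are therefore entourages `C n` whose intersection is not an entourage, and the partial
intersections `C 0 ∩ ⋯ ∩ C n` settle the case `κ = ℵ₀`.

For uncountable `κ`, well-order all chains `V 0 ⊇ V 1 ⊇ ⋯` with `V (n + 1) ○ V (n + 1) ⊆ V n`,
and call a level `(i, s)` essential if `V_i s` contains no finite intersection of earlier chains
taken at a common level. Essential levels generate the uniformity, so by minimality of the
uncountable `κ` there are at least `κ` of them. If an entourage lies below
`V_i (s + 4) ∩ C 0 ∩ ⋯ ∩ C s` for infinitely many essential `(i, s)`, the levels `s` are bounded
because of the `C` factor, so two of them `(i, s)`, `(j, s)` with `j < i` have the same trace at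
level `s + 2`. Then `V_j (s + 4) ⊆ V_i s`, contradicting the essentiality of `(i, s)`.
-/

open Filter Uniformity
open scoped SetRel

namespace SetRel

variable {X : Type*} {N U U' V V' : SetRel X X} {t : Set X}

theorem IsCover.subset_of_inter_prod_subset [N.IsSymm] (ht : N.IsCover univ t)
    (hU : N ○ U ○ N ⊆ U') (hV : N ○ V ○ N ⊆ V') (h : U' ∩ t ×ˢ t ⊆ V) : U ⊆ V' := by
  rintro ⟨a, b⟩ hab
  obtain ⟨y, hy, hay⟩ := ht (mem_univ a)
  obtain ⟨z, hz, hbz⟩ := ht (mem_univ b)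
  have hyz : (y, z) ∈ U' := hU ⟨b, ⟨a, N.symm hay, hab⟩, hbz⟩
  exact hV ⟨z, ⟨y, hay, h ⟨hyz, hy, hz⟩⟩, N.symm hbz⟩

theorem comp_comp_subset_of_subset [V.IsTrans] (hN : N ⊆ V) : N ○ V ○ N ⊆ V :=
  calc N ○ V ○ N ⊆ V ○ V ○ V := comp_subset_comp (comp_subset_comp hN le_rfl) hN
    _ ⊆ V := (comp_subset_comp_left comp_subset_self).trans comp_subset_self

end SetRel

theorem Set.biInter_dissipate_subset_iInter {α ι : Type*} {C : ℕ → Set α} {A : Set ι} {s : ι → ℕ}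
    (hA : ∀ k, ∃ i ∈ A, k ≤ s i) : ⋂ i ∈ A, dissipate C (s i) ⊆ ⋂ k, C k := fun _ hx =>
  mem_iInter.2 fun k =>
    let ⟨i, hi, hk⟩ := hA k
    dissipate_subset hk (mem_iInter₂.1 hx i hi)

theorem Filter.dissipate_mem {α : Type*} {l : Filter α} {C : ℕ → Set α} (hC : ∀ n, C n ∈ l)
    (n : ℕ) : dissipate C n ∈ l :=
  (biInter_mem (finite_Iic n)).2 fun k _ => hC k

variable {X : Type u} [UniformSpace X]

theorem TotallyBounded.exists_isSymm_isCover {s : Set X} (hs : TotallyBounded s)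
    {W : SetRel X X} (hW : W ∈ 𝓤 X) :
    ∃ N : SetRel X X, N.IsSymm ∧ N ⊆ W ∧ ∃ t : Set X, t.Finite ∧ N.IsCover s t := by
  obtain ⟨t, ht, hst⟩ := hs _ (symmetrize_mem_uniformity hW)
  exact ⟨_, inferInstance, SetRel.symmetrize_subset_self, t, ht,
    fun x hx => by simpa using hst hx⟩

structure EntourageChain (X : Type*) [UniformSpace X] where
  V : ℕ → SetRel X X
  mem_uniformity : ∀ n, V n ∈ 𝓤 X
  comp_subset : ∀ n, V (n + 1) ○ V (n + 1) ⊆ V n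

namespace EntourageChain

variable (c : EntourageChain X)

theorem antitone : Antitone c.V :=
  antitone_nat_of_succ_le fun n =>
    have := isRefl_of_mem_uniformity (c.mem_uniformity (n + 1))
    SetRel.left_subset_comp.trans (c.comp_subset n)

theorem comp_comp_subset {W : SetRel X X} {n : ℕ} (hW : W ⊆ c.V (n + 2)) :
    W ○ c.V (n + 2) ○ W ⊆ c.V n :=
  calc W ○ c.V (n + 2) ○ W ⊆ c.V (n + 1) ○ c.V (n + 1) :=
        SetRel.comp_subset_comp ((SetRel.comp_subset_comp hW le_rfl).trans (c.comp_subset _))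
          (hW.trans (c.antitone (by omega)))
    _ ⊆ c.V n := c.comp_subset n

instance isTrans_iInter : SetRel.IsTrans (⋂ n, c.V n) where
  trans _ b _ hab hbd := mem_iInter.2 fun n =>
    c.comp_subset n ⟨b, mem_iInter.1 hab (n + 1), mem_iInter.1 hbd (n + 1)⟩

theorem exists_subset {U : SetRel X X} (hU : U ∈ 𝓤 X) : ∃ c : EntourageChain X, c.V 0 ⊆ U := by
  choose! F hFmem hFcomp using fun V (hV : V ∈ 𝓤 X) => comp_mem_uniformity_sets hV
  have hmem : ∀ n, F^[n] U ∈ 𝓤 X := fun n => by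
    induction n with
    | zero => exact hU
    | succ n ih => simpa only [Function.iterate_succ_apply'] using hFmem _ ih
  refine ⟨⟨fun n => F^[n] U, hmem, fun n => ?_⟩, subset_rfl⟩
  simpa only [Function.iterate_succ_apply'] using hFcomp _ (hmem n)

end EntourageChain

section CountableInterFilter

variable [CountableInterFilter (𝓤 X)]

theorem exists_isTrans_subset {U : SetRel X X} (hU : U ∈ 𝓤 X) :
    ∃ Z : SetRel X X, Z ∈ 𝓤 X ∧ Z.IsTrans ∧ Z ⊆ U := by
  obtain ⟨c, hc⟩ := EntourageChain.exists_subset hU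
  exact ⟨⋂ n, c.V n, countable_iInter_mem.2 c.mem_uniformity, inferInstance,
    (iInter_subset _ 0).trans hc⟩

theorem wellFoundedOn_isTrans (htb : TotallyBounded (univ : Set X)) :
    {Z : SetRel X X | Z ∈ 𝓤 X ∧ SetRel.IsTrans Z}.WellFoundedOn (· < ·) := by
  rw [Set.wellFoundedOn_iff_no_descending_seq]
  intro f hf
  obtain ⟨N, _, hN, t, ht, hcover⟩ :=
    htb.exists_isSymm_isCover (countable_iInter_mem.2 fun n => (hf n).1)
  have habsorb : ∀ n, N ○ f n ○ N ⊆ f n := fun n =>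
    have := (hf n).2
    SetRel.comp_comp_subset_of_subset (hN.trans (iInter_subset _ n))
  have hsubset : ∀ m n, f m ∩ t ×ˢ t ⊆ f n ∩ t ×ˢ t → f m ⊆ f n := fun m n h =>
    hcover.subset_of_inter_prod_subset (habsorb m) (habsorb n) (h.trans inter_subset_left)
  obtain ⟨m, -, n, -, hmn, htrace⟩ := infinite_univ.exists_ne_map_eq_of_mapsTo
    (f := fun n => f n ∩ t ×ˢ t) (fun n _ => inter_subset_right) (ht.prod ht).finite_subsets
  exact hmn (f.injective ((hsubset m n htrace.le).antisymm (hsubset n m htrace.ge)))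

theorem exists_forall_subset_of_countableInterFilter (htb : TotallyBounded (univ : Set X)) :
    ∃ W ∈ 𝓤 X, ∀ U ∈ 𝓤 X, W ⊆ U := by
  obtain ⟨Z, ⟨hZ, -⟩, hmin⟩ :=
    (wellFoundedOn_isTrans htb).exists_minimal ⟨univ, univ_mem, SetRel.isTrans_univ⟩
  refine ⟨Z, hZ, fun U hU => ?_⟩
  obtain ⟨Z', hZ', hZ'trans, hZ'sub⟩ := exists_isTrans_subset (inter_mem hZ hU)
  exact (hmin ⟨hZ', hZ'trans⟩ (hZ'sub.trans inter_subset_left)).trans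
    (hZ'sub.trans inter_subset_right)

end CountableInterFilter

theorem exists_seq_iInter_notMem_uniformity (htb : TotallyBounded (univ : Set X))
    (hmin : ∀ W ∈ 𝓤 X, ∃ U ∈ 𝓤 X, ¬ W ⊆ U) :
    ∃ C : ℕ → SetRel X X, (∀ n, C n ∈ 𝓤 X) ∧ ⋂ n, C n ∉ 𝓤 X := by
  by_contra! H
  have : CountableInterFilter (𝓤 X) := ⟨fun S hS hmem => by
    rcases S.eq_empty_or_nonempty with rfl | hne
    · simp
    obtain ⟨C, rfl⟩ := hS.exists_eq_range hne
    exact sInter_range C ▸ H C fun n => hmem _ (mem_range_self n)⟩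
  obtain ⟨W, hW, hWmin⟩ := exists_forall_subset_of_countableInterFilter htb
  obtain ⟨U, hU, hWU⟩ := hmin W hW
  exact hWU (hWmin U hU)

def IsStronglyUnbounded {ι : Type*} (W : ι → SetRel X X) : Prop :=
  ∀ A : Set ι, A.Infinite → ⋂ i ∈ A, W i ∉ 𝓤 X

namespace IsStronglyUnbounded

theorem of_finite {ι : Type*} [Finite ι] (W : ι → SetRel X X) : IsStronglyUnbounded W :=
  fun A hA => (hA A.toFinite).elim

theorem comp {ι ι' : Type*} {W : ι → SetRel X X} (h : IsStronglyUnbounded W) {f : ι' → ι}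
    (hf : Function.Injective f) : IsStronglyUnbounded (W ∘ f) :=
  fun A hA => by simpa [biInter_image] using h _ (hA.image hf.injOn)

end IsStronglyUnbounded

theorem isStronglyUnbounded_dissipate {C : ℕ → SetRel X X} (hC : ⋂ n, C n ∉ 𝓤 X) :
    IsStronglyUnbounded (dissipate C) := fun _ hA hmem =>
  hC (mem_of_superset hmem (biInter_dissipate_subset_iInter fun k =>
    let ⟨n, hn, hkn⟩ := hA.exists_gt k
    ⟨n, hn, hkn.le⟩))

theorem Cardinal.mk_finset_le_max (α : Type u) : #(Finset α) ≤ max ℵ₀ #α := by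
  classical
  exact (mk_le_of_surjective List.toFinset_surjective).trans (mk_list_le_max α)

section EssentialLevels

variable {ι : Type u} [LinearOrder ι] (c : ι → EntourageChain X)

def IsGeneratedBelow (i : ι) (s : ℕ) : Prop :=
  ∃ G : Finset ι, (∀ j ∈ G, j < i) ∧ ∃ n, ⋂ j ∈ G, (c j).V n ⊆ (c i).V s

def essentialLevels : Set (ι × ℕ) := {p | ¬ IsGeneratedBelow c p.1 p.2}

theorem exists_finset_essentialLevels_subset [WellFoundedLT ι] (i : ι) (s : ℕ) :
    ∃ G : Finset (essentialLevels c), ⋂ p ∈ G, (c p.1.1).V p.1.2 ⊆ (c i).V s := by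
  classical
  induction i using WellFoundedLT.induction generalizing s with
  | ind i IH =>
  by_cases hs : (i, s) ∈ essentialLevels c
  · exact ⟨{⟨(i, s), hs⟩}, by simp⟩
  obtain ⟨G, hG, n, hGn⟩ := not_not.1 hs
  choose! H hH using fun j hj => IH j (hG j hj) n
  refine ⟨G.biUnion H, fun x hx => hGn (mem_iInter₂.2 fun j hj => hH j hj ?_)⟩
  exact mem_iInter₂.2 fun p hp => mem_iInter₂.1 hx p (Finset.mem_biUnion.2 ⟨j, hj, hp⟩)

theorem le_mk_essentialLevels [WellFoundedLT ι] (hc : ∀ U ∈ 𝓤 X, ∃ i n, (c i).V n ⊆ U)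
    {κ : Cardinal.{u}} (hκ : ℵ₀ < κ)
    (hleast : ∀ B : Set (SetRel X X), (𝓤 X).HasBasis (· ∈ B) id → κ ≤ #B) :
    κ ≤ #(essentialLevels c) := by
  let b : Finset (essentialLevels c) → SetRel X X := fun G => ⋂ p ∈ G, (c p.1.1).V p.1.2
  have hbasis : (𝓤 X).HasBasis (· ∈ range b) id := ⟨fun U => ⟨fun hU => ?_, ?_⟩⟩
  · have := (hleast _ hbasis).trans (mk_range_le.trans (mk_finset_le_max _))
    exact (le_max_iff.1 this).resolve_left hκ.not_ge
  · obtain ⟨i, n, hin⟩ := hc U hU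
    obtain ⟨G, hG⟩ := exists_finset_essentialLevels_subset c i n
    exact ⟨b G, mem_range_self G, hG.trans hin⟩
  · rintro ⟨_, ⟨G, rfl⟩, hGU⟩
    exact mem_of_superset ((biInter_finset_mem G).2 fun p _ => (c p.1.1).mem_uniformity _) hGU

variable {c}

theorem isGeneratedBelow_of_inter_prod_subset {N : SetRel X X} [N.IsSymm] {t : Set X}
    (ht : N.IsCover univ t) {i j : ι} (hji : j < i) {s : ℕ} (hi : N ⊆ (c i).V (s + 4))
    (hj : N ⊆ (c j).V (s + 4)) (h : (c j).V (s + 2) ∩ t ×ˢ t ⊆ (c i).V (s + 2)) :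
    IsGeneratedBelow c i s := by
  refine ⟨{j}, by simpa using hji, s + 4, ?_⟩
  simpa using ht.subset_of_inter_prod_subset ((c j).comp_comp_subset hj)
    ((c i).comp_comp_subset (hi.trans ((c i).antitone (by omega)))) h

theorem isStronglyUnbounded_essentialLevels (htb : TotallyBounded (univ : Set X))
    {C : ℕ → SetRel X X} (hC : ⋂ n, C n ∉ 𝓤 X) :
    IsStronglyUnbounded fun p : essentialLevels c =>
      (c p.1.1).V (p.1.2 + 4) ∩ dissipate C p.1.2 := by
  intro A hA hmem
  by_cases hunbdd : ∀ k, ∃ p ∈ A, k ≤ p.1.2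
  · exact hC (mem_of_superset hmem ((biInter_mono subset_rfl fun _ _ => inter_subset_right).trans
      (biInter_dissipate_subset_iInter hunbdd)))
  push Not at hunbdd
  obtain ⟨b, hb⟩ := hunbdd
  obtain ⟨N, _, hN, t, ht, hcover⟩ := htb.exists_isSymm_isCover hmem
  have hNA : ∀ p ∈ A, N ⊆ (c p.1.1).V (p.1.2 + 4) := fun p hp =>
    hN.trans ((biInter_subset_of_mem hp).trans inter_subset_left)
  obtain ⟨⟨⟨i, s⟩, hi⟩, hiA, ⟨⟨j, s'⟩, hj⟩, hjA, hij, hf⟩ :=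
    hA.exists_ne_map_eq_of_mapsTo (f := fun p : essentialLevels c => (p.1.2,
      (c p.1.1).V (p.1.2 + 2) ∩ t ×ˢ t)) (t := Iio b ×ˢ 𝒫 (t ×ˢ t))
      (fun p hp => ⟨hb p hp, inter_subset_right⟩) ((finite_Iio b).prod (ht.prod ht).finite_subsets)
  obtain ⟨hlevel, htrace⟩ := Prod.ext_iff.1 hf
  dsimp only at hlevel htrace
  subst hlevel
  rcases lt_or_gt_of_ne fun h : i = j => hij (by subst h; rfl) with h | h
  · exact hj (isGeneratedBelow_of_inter_prod_subset hcover h (hNA _ hjA) (hNA _ hiA)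
      (htrace.le.trans inter_subset_left))
  · exact hi (isGeneratedBelow_of_inter_prod_subset hcover h (hNA _ hiA) (hNA _ hjA)
      (htrace.ge.trans inter_subset_left))

end EssentialLevels

theorem exists_not_subset_of_one_lt {κ : Cardinal.{u}} (hκ : 1 < κ)
    (hleast : ∀ B : Set (SetRel X X), (𝓤 X).HasBasis (· ∈ B) id → κ ≤ #B) :
    ∀ W ∈ 𝓤 X, ∃ U ∈ 𝓤 X, ¬ W ⊆ U := by
  intro W hW
  by_contra! hWmin
  have hbasis : (𝓤 X).HasBasis (· ∈ ({W} : Set (SetRel X X))) id :=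
    ⟨fun U => ⟨fun hU => ⟨W, rfl, hWmin U hU⟩, fun ⟨_, hV, hVU⟩ => mem_of_superset (hV ▸ hW) hVU⟩⟩
  simpa using hκ.trans_le ((hleast _ hbasis).trans (mk_singleton W).le)

theorem exists_isStronglyUnbounded (htb : TotallyBounded (univ : Set X)) {κ : Cardinal.{u}}
    (hleast : ∀ B : Set (SetRel X X), (𝓤 X).HasBasis (· ∈ B) id → κ ≤ #B) :
    ∃ W : κ.out → SetRel X X, (∀ i, W i ∈ 𝓤 X) ∧ IsStronglyUnbounded W := by
  rcases finite_or_infinite κ.out with hfin | hinf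
  · exact ⟨fun _ => univ, fun _ => univ_mem, .of_finite _⟩
  have hκ : ℵ₀ ≤ κ := by simpa using Cardinal.infinite_iff.1 hinf
  obtain ⟨C, hCmem, hC⟩ := exists_seq_iInter_notMem_uniformity htb
    (exists_not_subset_of_one_lt (one_lt_aleph0.trans_le hκ) hleast)
  rcases hκ.eq_or_lt with hκ | hκ
  · obtain ⟨f, hf⟩ := (mk_le_aleph0_iff.1 ((mk_out κ).trans hκ.symm).le).exists_injective_nat
    exact ⟨dissipate C ∘ f, fun i => dissipate_mem hCmem _,
      (isStronglyUnbounded_dissipate hC).comp hf⟩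
  · obtain ⟨_, _⟩ := exists_wellFoundedLT (EntourageChain X)
    have hκc := le_mk_essentialLevels id (fun U hU => (EntourageChain.exists_subset hU).imp
      fun c hc => ⟨0, hc⟩) hκ hleast
    obtain ⟨f⟩ : Nonempty (κ.out ↪ essentialLevels (id : EntourageChain X → _)) := by
      rwa [← Cardinal.le_def, mk_out]
    exact ⟨(fun p : essentialLevels id => p.1.1.V (p.1.2 + 4) ∩ dissipate C p.1.2) ∘ f,
      fun i => inter_mem ((f i).1.1.mem_uniformity _) (dissipate_mem hCmem _),
      (isStronglyUnbounded_essentialLevels htb hC).comp f.injective⟩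

theorem tukeyGE_finset_of_isStronglyUnbounded {α : Type*} {W : α → SetRel X X}
    (hWmem : ∀ i, W i ∈ 𝓤 X) (hW : IsStronglyUnbounded W) :
    TukeyGE (EntouragePoset X) (Finset α) := by
  refine ⟨fun s => OrderDual.toDual ⟨⋂ i ∈ s, W i, (biInter_finset_mem s).2 fun i _ => hWmem i⟩,
    fun S hS ⟨U, hU⟩ => ?_⟩
  have hinf : (⋃ s ∈ S, (s : Set α)).Infinite := fun hfin =>
    hS ⟨hfin.toFinset, fun s hs => by
      simpa using subset_biUnion_of_mem (u := fun s : Finset α => (s : Set α)) hs⟩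
  refine hW _ hinf (mem_of_superset (OrderDual.ofDual U).2 ?_)
  simp only [subset_iInter_iff, mem_iUnion]
  rintro i ⟨s, hs, his⟩
  exact Subset.trans (hU (mem_image_of_mem _ hs)) (biInter_subset_of_mem his)

theorem tukeyGE_finset_of_forall_exists_subset {α : Type*} {b : α → SetRel X X}
    (hb : ∀ i, b i ∈ 𝓤 X) (hcof : ∀ U ∈ 𝓤 X, ∃ i, b i ⊆ U) :
    TukeyGE (Finset α) (EntouragePoset X) := by
  classical
  choose g hg using hcof
  refine ⟨fun U => {g _ (OrderDual.ofDual U).2}, fun S hS ⟨t, ht⟩ => hS ?_⟩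
  refine ⟨OrderDual.toDual ⟨⋂ i ∈ t, b i, (biInter_finset_mem t).2 fun i _ => hb i⟩, ?_⟩
  intro U hU
  have : g _ (OrderDual.ofDual U).2 ∈ t := ht (mem_image_of_mem _ hU) (Finset.mem_singleton_self _)
  exact (biInter_subset_of_mem this).trans (hg _ _)

/-- A totally bounded uniformity is Tukey equivalent to `[κ]^{<ω}` where `κ` is the
least cardinality of a basis of the uniformity. -/
theorem stmt10 {X : Type u} [UniformSpace X]
    (htb : TotallyBounded (Set.univ : Set X))
    (κ : Cardinal.{u})
    (hbasis : ∃ B : Set (Set (X × X)), (∀ U ∈ B, U ∈ uniformity X) ∧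
      (∀ U ∈ uniformity X, ∃ V ∈ B, V ⊆ U) ∧ #B = κ)
    (hleast : ∀ B : Set (Set (X × X)), (∀ U ∈ B, U ∈ uniformity X) →
      (∀ U ∈ uniformity X, ∃ V ∈ B, V ⊆ U) → κ ≤ #B) :
    TukeyEquiv (EntouragePoset X) (Finset κ.out) := by
  obtain ⟨B, hBmem, hBcof, hκB⟩ := hbasis
  obtain ⟨W, hWmem, hW⟩ := exists_isStronglyUnbounded htb fun B hB =>
    hleast B (fun _ => hB.mem_of_mem) fun _ => hB.mem_iff.1
  obtain ⟨e⟩ : Nonempty (κ.out ≃ B) := Cardinal.eq.1 (by rw [mk_out, hκB])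
  refine ⟨tukeyGE_finset_of_isStronglyUnbounded hWmem hW,
    tukeyGE_finset_of_forall_exists_subset (fun i => hBmem _ (e i).2) fun U hU => ?_⟩
  obtain ⟨V, hV, hVU⟩ := hBcof U hU
  exact ⟨e.symm ⟨V, hV⟩, by simpa using hVU⟩
end

section
/- Let X be a uniform space, κ an infinite cardinal, and suppose the entourage poset of X has calibre (κ⁺, ω), where κ⁺ is the successor cardinal of κ. Then every totally bounded subset A of X (for every entourage U there is a finite F ⊆ X with A ⊆ ⋃_{x∈F} U[x]), equipped with the subspace topology, has a topological base of cardinality at most κ. -/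
/-!
If the trace of the uniformity on `A` had no base of at most `κ` entourages, transfinite
recursion would give entourages `U ξ`, `ξ < κ⁺`, with `U ξ ∩ A ×ˢ A ⊄ U η ○ U η ○ U η` whenever
`ξ < η`. By the calibre, infinitely many of them contain a common entourage `W`. Total
boundedness splits `A` into finitely many `W`-small cells, so two of these entourages, `U ξ` and
`U η`, join the same pairs of cells; then `U ξ ∩ A ×ˢ A ⊆ W ○ U η ○ W ⊆ U η ○ U η ○ U η`, a
contradiction. Finally, on the totally bounded space `A` a uniformity base of at most `κ`
entourages gives a topological base of at most `κ` sets: finitely many small balls per entourage.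
-/

open Set Topology Cardinal

universe u

open TopologicalSpace
open scoped Uniformity SetRel Ordinal

theorem exists_forall_lt_rel_of_forall_card_lt {α E : Type u} [LinearOrder α] [WellFoundedLT α]
    (hα : (#α).ord = typeLT α) {r : E → E → Prop}
    (h : ∀ S : Set E, #S < #α → ∃ e, ∀ x ∈ S, r x e) :
    ∃ f : α → E, ∀ i j, i < j → r (f i) (f j) := by
  choose g hg using h
  have hsmall (i : α) (f : Iio i → E) : #(range f) < #α :=
    mk_range_le.trans_lt (mk_Iio_lt i hα)
  let f := IsWellFounded.wf.fix (r := (· < ·)) fun i f => g _ (hsmall i fun j => f j j.2)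
  refine ⟨f, fun i j hij => ?_⟩
  rw [show f j = _ from IsWellFounded.wf.fix_eq _ j]
  exact hg _ _ _ ⟨⟨i, hij⟩, rfl⟩

section UniformSpace

variable {X : Type*} [UniformSpace X]

theorem TotallyBounded.exists_ne_inter_subset_comp_comp {A : Set X} (hA : TotallyBounded A)
    {V : SetRel X X} (hV : V ∈ 𝓤 X) {ι : Type*} {s : Set ι} (hs : s.Infinite)
    (g : ι → SetRel X X) :
    ∃ i ∈ s, ∃ j ∈ s, i ≠ j ∧ g i ∩ A ×ˢ A ⊆ V ○ g j ○ V ∧ g j ∩ A ×ˢ A ⊆ V ○ g i ○ V := by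
  obtain ⟨W, hW, hWsymm, hWV⟩ := comp_symm_mem_uniformity_sets hV
  obtain ⟨F, hF, hAF⟩ := hA W hW
  have : ∀ a ∈ A, ∃ y ∈ F, (a, y) ∈ W := fun a ha => by simpa using hAF ha
  choose! ρ hρF hρW using this
  -- `pattern i` records which pairs of cells of the finite `W`-partition `ρ` are joined by `g i`.
  let pattern (i : ι) : Set (X × X) := Prod.map ρ ρ '' (g i ∩ A ×ˢ A)
  have hpattern : MapsTo pattern s {P | P ⊆ F ×ˢ F} := by
    rintro i - _ ⟨⟨a, b⟩, ⟨-, ha, hb⟩, rfl⟩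
    exact ⟨hρF a ha, hρF b hb⟩
  have hsub {i j : ι} (hij : pattern i = pattern j) : g i ∩ A ×ˢ A ⊆ V ○ g j ○ V := by
    rintro ⟨a, b⟩ hab
    obtain ⟨⟨p, q⟩, ⟨hpq, hp, hq⟩, hρ⟩ : (ρ a, ρ b) ∈ pattern j := hij ▸ mem_image_of_mem _ hab
    simp only [Prod.map, Prod.mk.injEq] at hρ
    have hap : (a, p) ∈ V := hWV ⟨ρ a, hρW a hab.2.1, hρ.1 ▸ SetRel.symm W (hρW p hp)⟩
    have hqb : (q, b) ∈ V := hWV ⟨ρ b, hρ.2 ▸ hρW q hq, SetRel.symm W (hρW b hab.2.2)⟩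
    exact ⟨q, ⟨p, hap, hpq⟩, hqb⟩
  obtain ⟨i, hi, j, hj, hne, hij⟩ :=
    hs.exists_ne_map_eq_of_mapsTo hpattern (hF.prod hF).finite_subsets
  exact ⟨i, hi, j, hj, hne, hsub hij, hsub hij.symm⟩

theorem TotallyBounded.exists_isTopologicalBasis_card_le {κ : Cardinal.{u}} (hκ : ℵ₀ ≤ κ)
    {Y : Type u} [UniformSpace Y] (hY : TotallyBounded (univ : Set Y)) {ι : Type u}
    {p : ι → Prop} {s : ι → SetRel Y Y} (h : (𝓤 Y).HasBasis p s) (hι : #ι ≤ κ) :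
    ∃ B : Set (Set Y), #B ≤ κ ∧ IsTopologicalBasis B := by
  have hnet (i : ι) : ∃ F : Set Y, F.Finite ∧ (p i → ∀ x, ∃ y ∈ F, (x, y) ∈ interior (s i)) := by
    by_cases hi : p i
    · obtain ⟨F, hF, hcover⟩ := hY _ (interior_mem_uniformity (h.mem_of_mem hi))
      exact ⟨F, hF, fun _ x => by simpa using hcover (mem_univ x)⟩
    · exact ⟨∅, finite_empty, fun h => (hi h).elim⟩
  choose F hF hcover using hnet
  let cell (i : ι) (y : Y) : Set Y := {x | (x, y) ∈ interior (s i)}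
  refine ⟨⋃ i, cell i '' F i, ?_, ?_⟩
  · calc #(⋃ i, cell i '' F i) ≤ #ι * ⨆ i, #(cell i '' F i) := mk_iUnion_le _
      _ ≤ κ * ℵ₀ := mul_le_mul' hι (ciSup_le' fun i => ((hF i).image _).lt_aleph0.le)
      _ = κ := mul_aleph0_eq hκ
  · refine isTopologicalBasis_of_isOpen_of_nhds ?_ fun a u ha hu => ?_
    · rintro _ ⟨_, ⟨i, rfl⟩, y, -, rfl⟩
      exact isOpen_interior.preimage (Continuous.prodMk_left y)
    obtain ⟨U, hU, haU⟩ := UniformSpace.mem_nhds_iff.1 (hu.mem_nhds ha)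
    obtain ⟨V, hV, hVsymm, hVU⟩ := comp_symm_mem_uniformity_sets hU
    obtain ⟨i, hi, hiV⟩ := h.mem_iff.1 hV
    obtain ⟨y, hy, hay⟩ := hcover i hi a
    refine ⟨cell i y, mem_iUnion.2 ⟨i, mem_image_of_mem _ hy⟩, hay, fun x hx => haU ?_⟩
    exact hVU ⟨y, hiV (interior_subset hay), SetRel.symm V (hiV (interior_subset hx))⟩

theorem hasBasis_uniformity_subtype_of_inter_subset {A : Set X} {S : Set (SetRel X X)}
    (hS : ∀ V ∈ S, V ∈ 𝓤 X) (h : ∀ U ∈ 𝓤 X, ∃ V ∈ S, V ∩ A ×ˢ A ⊆ U) :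
    (𝓤 A).HasBasis (fun _ : S => True) fun V => (fun q : A × A => (q.1.1, q.2.1)) ⁻¹' V := by
  rw [uniformity_subtype]
  refine ⟨fun t => ⟨fun ht => ?_, fun ⟨V, _, hVt⟩ => ⟨V, hS V V.2, hVt⟩⟩⟩
  obtain ⟨U, hU, hUt⟩ := Filter.mem_comap.1 ht
  obtain ⟨V, hV, hVU⟩ := h U hU
  exact ⟨⟨V, hV⟩, trivial, fun q hq => hUt (hVU ⟨hq, q.1.2, q.2.2⟩)⟩

end UniformSpace

section Calibre

variable {X : Type u} [UniformSpace X] {κ : Cardinal.{u}}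

theorem Calibre.exists_lt_inter_subset_comp_comp
    (hcal : Calibre (EntouragePoset X) (Order.succ κ)) {A : Set X} (hA : TotallyBounded A)
    {α : Type u} [LinearOrder α] (hα : #α = Order.succ κ) {f : α → EntouragePoset X}
    (hf : f.Injective) :
    ∃ i j, i < j ∧ (f i).ofDual.1 ∩ A ×ˢ A ⊆ (f j).ofDual.1 ○ (f j).ofDual.1 ○ (f j).ofDual.1 := by
  obtain ⟨T, hTf, hTinf, W, hW⟩ := hcal _ (by rw [mk_range_eq f hf, hα])
  obtain ⟨e, he, e', he', hne, h₁, h₂⟩ :=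
    hA.exists_ne_inter_subset_comp_comp W.ofDual.2 hTinf fun e => e.ofDual.1
  obtain ⟨i, rfl⟩ := hTf he
  obtain ⟨j, rfl⟩ := hTf he'
  have hcomp {e : EntouragePoset X} (he : e ∈ T) :
      W.ofDual.1 ○ e.ofDual.1 ○ W.ofDual.1 ⊆ e.ofDual.1 ○ e.ofDual.1 ○ e.ofDual.1 :=
    SetRel.comp_subset_comp (SetRel.comp_subset_comp (hW he) .rfl) (hW he)
  rcases lt_or_gt_of_ne (ne_of_apply_ne f hne) with h | h
  · exact ⟨i, j, h, h₁.trans (hcomp he')⟩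
  · exact ⟨j, i, h, h₂.trans (hcomp he)⟩

theorem Calibre.exists_card_le_forall_inter_subset
    (hcal : Calibre (EntouragePoset X) (Order.succ κ)) {A : Set X} (hA : TotallyBounded A) :
    ∃ S : Set (SetRel X X), (∀ V ∈ S, V ∈ 𝓤 X) ∧ #S ≤ κ ∧
      ∀ U ∈ 𝓤 X, ∃ V ∈ S, V ∩ A ×ˢ A ⊆ U := by
  by_contra! hnot
  let r (e e' : EntouragePoset X) : Prop :=
    ¬ e.ofDual.1 ∩ A ×ˢ A ⊆ e'.ofDual.1 ○ e'.ofDual.1 ○ e'.ofDual.1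
  have hstep (S : Set (EntouragePoset X)) (hS : #S < Order.succ κ) : ∃ e, ∀ x ∈ S, r x e := by
    obtain ⟨U, hU, hUS⟩ := hnot ((fun e => e.ofDual.1) '' S)
      (by rintro _ ⟨e, -, rfl⟩; exact e.ofDual.2) (mk_image_le.trans (Order.lt_succ_iff.1 hS))
    obtain ⟨t, ht, -, htU⟩ := comp_comp_symm_mem_uniformity_sets hU
    exact ⟨OrderDual.toDual ⟨t, ht⟩,
      fun x hx hsub => hUS _ (mem_image_of_mem _ hx) (hsub.trans htU)⟩
  have hirrefl (e : EntouragePoset X) : ¬ r e e := by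
    have := isRefl_of_mem_uniformity e.ofDual.2
    exact not_not.2 <| inter_subset_left.trans <|
      SetRel.left_subset_comp.trans SetRel.left_subset_comp
  let α := (Order.succ κ).ord.ToType
  obtain ⟨f, hf⟩ := exists_forall_lt_rel_of_forall_card_lt (α := α)
    (by rw [mk_ord_toType, Ordinal.type_toType]) (r := r)
    fun S hS => hstep S (by rwa [mk_ord_toType] at hS)
  have hinj : f.Injective := by
    intro i j hij
    by_contra hne
    rcases lt_or_gt_of_ne hne with h | h
    · exact hirrefl (f j) (hij ▸ hf i j h)
    · exact hirrefl (f i) (hij ▸ hf j i h)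
  obtain ⟨i, j, hij, hsub⟩ := hcal.exists_lt_inter_subset_comp_comp hA (mk_ord_toType _) hinj
  exact hf i j hij hsub

end Calibre

/-- If the entourage poset of a uniform space has calibre `(κ⁺, ω)`, then every
totally bounded subset has a topological base of cardinality at most `κ`. -/
theorem stmt11 {X : Type u} [UniformSpace X]
    (κ : Cardinal.{u}) (hκ : ℵ₀ ≤ κ)
    (hcal : Calibre (EntouragePoset X) (Order.succ κ))
    (A : Set X) (hA : TotallyBounded A) :
    ∃ B : Set (Set A), #B ≤ κ ∧ TopologicalSpace.IsTopologicalBasis B := by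
  obtain ⟨S, hS, hScard, hSA⟩ := hcal.exists_card_le_forall_inter_subset hA
  have hAu : TotallyBounded (univ : Set A) := by
    rw [← Subtype.coe_preimage_self A]
    exact totallyBounded_preimage isUniformEmbedding_subtype_val.isUniformInducing hA
  exact hAu.exists_isTopologicalBasis_card_le hκ
    (hasBasis_uniformity_subtype_of_inter_subset hS hSA) hScard
end

section
/- Let X be a uniform space, κ an infinite cardinal, and suppose the entourage poset of X has calibre (κ⁺, ω), where κ⁺ is the successor cardinal of κ. If A ⊆ X is such that the subspace A is pseudocompact (every continuous real-valued function on A is bounded), then A, with the subspace topology, has a topological base of cardinality at most κ. -/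
open Set Topology Cardinal

universe u

/-!
A pseudocompact uniform space is totally bounded: a uniformly discrete sequence `x n` would carry
a locally finite family of bumps, and `∑ n • bump n` would be continuous and unbounded.

If the trace of the uniformity on `A` had no base of at most `κ` entourages, transfinite recursion
would give entourages `U i`, `i < κ⁺`, such that for `i < j` some pair of points of `A` lies in
`U i` but not in `U j ○ U j ○ U j`. By calibre infinitely many `U i` contain a common entourage `V`.
Colour the witnessing pairs by the cells of a finite partition of `A` into `V`-small pieces; indices
`i < j < k` whose witnesses have the same colour put the `(i, j)`-witness into
`V ○ U j ○ V ⊆ U j ○ U j ○ U j`, a contradiction. Finite nets for the at most `κ` basic entourages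
then give a base of at most `κ` open sets.
-/

open Filter UniformSpace
open scoped Uniformity SetRel

theorem exists_lt_lt_eq_of_finite {α C : Type*} [LinearOrder α] [Infinite α] [Finite C]
    (χ : ∀ a b : α, a < b → C) :
    ∃ a b c : α, ∃ (hab : a < b) (hbc : b < c), χ a b hab = χ b c hbc := by
  -- if `a < b` share their colours on upward edges, the colour of `(a, b)` recurs on some `(b, c)`
  let out : α → Set C := fun b => {x | ∃ c, ∃ h : b < c, χ b c h = x}
  have of_out_eq : ∀ a b, a < b → out a = out b →
      ∃ a b c : α, ∃ (hab : a < b) (hbc : b < c), χ a b hab = χ b c hbc := by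
    intro a b hab hout
    obtain ⟨c, hbc, hc⟩ : χ a b hab ∈ out b := hout ▸ ⟨b, hab, rfl⟩
    exact ⟨a, b, c, hab, hbc, hc.symm⟩
  obtain ⟨a, b, hne, hout⟩ := Finite.exists_ne_map_eq_of_infinite out
  rcases hne.lt_or_gt with h | h
  · exact of_out_eq a b h hout
  · exact of_out_eq b a h hout.symm

theorem WellFoundedLT.exists_forall_range_Iio {O β : Type*} [LinearOrder O] [WellFoundedLT O]
    [Nonempty β] (P : Set β → β → Prop) (hP : ∀ i : O, ∀ g : Iio i → β, ∃ b, P (range g) b) :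
    ∃ f : O → β, ∀ i, P (range fun j : Iio i => f j) (f i) := by
  let f : O → β := wellFounded_lt.fix fun i rec =>
    Classical.epsilon (P (range fun j : Iio i => rec j j.2))
  refine ⟨f, fun i => ?_⟩
  rw [show f i = Classical.epsilon (P (range fun j : Iio i => f j)) from wellFounded_lt.fix_eq _ i]
  exact Classical.epsilon_spec (hP i _)

theorem CompletelyRegularSpace.exists_continuous_eq_one_support_subset {Y : Type*}
    [TopologicalSpace Y] [CompletelyRegularSpace Y] {x : Y} {U : Set Y} (hU : IsOpen U)
    (hx : x ∈ U) : ∃ f : Y → ℝ, Continuous f ∧ f x = 1 ∧ Function.support f ⊆ U := by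
  obtain ⟨g, hg, hgx, hgU⟩ := completely_regular_isOpen x U hU hx
  refine ⟨fun y => 1 - g y, continuous_const.sub (continuous_subtype_val.comp hg),
    by simp [hgx], fun y hy => ?_⟩
  by_contra hyU
  exact hy (by simp [hgU hyU])

section UniformSpace

variable {Y : Type*} [UniformSpace Y]

theorem exists_pairwise_notMem_of_not_totallyBounded (h : ¬TotallyBounded (univ : Set Y)) :
    ∃ d ∈ 𝓤 Y, ∃ x : ℕ → Y, Pairwise fun m n => (x m, x n) ∉ d := by
  simp only [TotallyBounded, not_forall, exists_prop, univ_subset_iff, not_exists, not_and] at h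
  obtain ⟨d, hd, hcover⟩ := h
  refine ⟨SetRel.symmetrize d, symmetrize_mem_uniformity hd, ?_⟩
  have : Std.Symm fun a b : Y => (a, b) ∉ SetRel.symmetrize d :=
    ⟨fun a b hab hba => hab (SetRel.symm _ hba)⟩
  obtain ⟨x, -, hx⟩ := exists_seq_of_forall_finset_exists' (fun _ => True)
    (fun a b => (a, b) ∉ SetRel.symmetrize d) fun s _ => by
      obtain ⟨y, hy⟩ := (ne_univ_iff_exists_notMem _).1 (hcover s s.finite_toSet)
      refine ⟨y, trivial, fun z hz hzy => hy (mem_biUnion hz ?_)⟩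
      exact SetRel.symmetrize_subset_self (SetRel.symm (SetRel.symmetrize d) hzy)
  exact ⟨x, hx⟩

theorem totallyBounded_univ_of_forall_bounded
    (hbdd : ∀ f : Y → ℝ, Continuous f → ∃ C, ∀ y, |f y| ≤ C) :
    TotallyBounded (univ : Set Y) := by
  by_contra hY
  obtain ⟨d, hd, x, hx⟩ := exists_pairwise_notMem_of_not_totallyBounded hY
  obtain ⟨d₁, hd₁, -, -, hd₁d⟩ := comp_open_symm_mem_uniformity_sets hd
  obtain ⟨U, hU, hUo, hUsymm, hUd₁⟩ := comp_open_symm_mem_uniformity_sets hd₁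
  have eq_of_mem : ∀ {m n : ℕ} {y : Y}, (x m, y) ∈ d₁ → (y, x n) ∈ d₁ → m = n := fun hm hn =>
    by_contra fun hmn => hx hmn (hd₁d (SetRel.prodMk_mem_comp hm hn))
  have hUd₁' : ∀ {a b c : Y}, (a, b) ∈ U → (b, c) ∈ U → (a, c) ∈ d₁ := fun hab hbc =>
    hUd₁ (SetRel.prodMk_mem_comp hab hbc)
  have hUsub : U ⊆ d₁ := (subset_comp_self_of_mem_uniformity hU).trans hUd₁
  choose bump hbump_cont hbump_one hbump_supp using fun n =>
    CompletelyRegularSpace.exists_continuous_eq_one_support_subset (isOpen_ball (x n) hUo)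
      (mem_ball_self (x n) hU)
  -- each `U`-ball meets at most one of the balls `ball (x n) U`
  have hfin : LocallyFinite fun n => ball (x n) U := fun z => by
    refine ⟨ball z U, ball_mem_nhds z hU, Set.Subsingleton.finite ?_⟩
    rintro m ⟨y, hym, hyz⟩ n ⟨y', hyn, hyz'⟩
    exact eq_of_mem (hUd₁' hym (SetRel.symm U hyz)) (hUd₁' hyz' (SetRel.symm U hyn))
  let f : Y → ℝ := fun y => ∑ᶠ n : ℕ, (n : ℝ) * bump n y
  have hf : Continuous f := continuous_finsum (fun n => continuous_const.mul (hbump_cont n))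
    (hfin.subset fun n => (Function.support_mul_subset_right _ _).trans (hbump_supp n))
  have hfx : ∀ n, f (x n) = n := fun n => by
    rw [show f (x n) = n * bump n (x n) from finsum_eq_single _ n fun m hmn => ?_,
      hbump_one, mul_one]
    refine mul_eq_zero_of_right _ (Function.notMem_support.1 fun hm => hmn ?_)
    exact eq_of_mem (hUsub (hbump_supp m hm)) (refl_mem_uniformity hd₁)
  obtain ⟨C, hC⟩ := hbdd f hf
  obtain ⟨n, hn⟩ := exists_nat_gt C
  have hnC : (n : ℝ) ≤ C := hfx n ▸ (abs_le.1 (hC (x n))).2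
  linarith

theorem exists_finite_fun_of_totallyBounded (hY : TotallyBounded (univ : Set Y))
    {V : Set (Y × Y)} (hV : V ∈ 𝓤 Y) :
    ∃ t : Set Y, t.Finite ∧ ∃ c : Y → t, ∀ x y, c x = c y → (x, y) ∈ V := by
  obtain ⟨W, hW, hWsymm, hWV⟩ := comp_symm_mem_uniformity_sets hV
  obtain ⟨t, ht, hcover⟩ := hY W hW
  have : ∀ x, ∃ z : t, (x, (z : Y)) ∈ W := fun x => by
    obtain ⟨z, hz, hxz⟩ := mem_iUnion₂.1 (hcover (mem_univ x))
    exact ⟨⟨z, hz⟩, hxz⟩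
  choose c hc using this
  refine ⟨t, ht, c, fun x y hxy => hWV (SetRel.prodMk_mem_comp (hc x) ?_)⟩
  rw [hxy]
  exact SetRel.symm W (hc y)

theorem exists_isTopologicalBasis_card_le_of_hasBasis {Y : Type u} [UniformSpace Y]
    (hY : TotallyBounded (univ : Set Y)) {κ : Cardinal.{u}} (hκ : ℵ₀ ≤ κ) {ι : Type u}
    {p : ι → Prop} {s : ι → Set (Y × Y)} (hs : (𝓤 Y).HasBasis p s) (hp : #{i | p i} ≤ κ) :
    ∃ B : Set (Set Y), #B ≤ κ ∧ TopologicalSpace.IsTopologicalBasis B := by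
  choose t ht hcover using fun i : {i | p i} => hY _ (interior_mem_uniformity (hs.mem_of_mem i.2))
  let piece : {i | p i} → Y → Set Y := fun i y => {x | (x, y) ∈ interior (s i)}
  refine ⟨⋃ i, piece i '' t i, ?_, ?_⟩
  · calc #(⋃ i, piece i '' t i) ≤ #{i | p i} * ⨆ i, #(piece i '' t i) := mk_iUnion_le _
      _ ≤ κ * κ := mul_le_mul' hp (ciSup_le' fun i => (((ht i).image _).lt_aleph0.le.trans hκ))
      _ = κ := mul_eq_self hκ
  refine TopologicalSpace.isTopologicalBasis_of_isOpen_of_nhds ?_ fun a u hau hu => ?_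
  · simp only [mem_iUnion, mem_image]
    rintro _ ⟨i, y, -, rfl⟩
    exact isOpen_interior.preimage (Continuous.prodMk_left y)
  obtain ⟨U, hU, haU⟩ := isOpen_iff_ball_subset.1 hu a hau
  obtain ⟨W, hW, hWsymm, hWU⟩ := comp_symm_mem_uniformity_sets hU
  obtain ⟨i, hi, hiW⟩ := hs.mem_iff.1 hW
  obtain ⟨y, hy, hay⟩ := mem_iUnion₂.1 (hcover ⟨i, hi⟩ (mem_univ a))
  refine ⟨piece ⟨i, hi⟩ y, mem_iUnion.2 ⟨⟨i, hi⟩, mem_image_of_mem _ hy⟩, hay, fun x hx => ?_⟩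
  exact haU (hWU (SetRel.prodMk_mem_comp (hiW (interior_subset hay))
    (SetRel.symm W (hiW (interior_subset hx)))))

end UniformSpace

theorem Calibre.exists_infinite_forall_subset {X : Type u} [UniformSpace X] {μ : Cardinal.{u}}
    (hcal : Calibre (EntouragePoset X) μ) {I : Type u} (hI : #I = μ) {e : I → Set (X × X)}
    (he : Function.Injective e) (heU : ∀ i, e i ∈ 𝓤 X) :
    ∃ J : Set I, J.Infinite ∧ ∃ V ∈ 𝓤 X, ∀ j ∈ J, V ⊆ e j := by
  let e' : I → EntouragePoset X := fun i => OrderDual.toDual ⟨e i, heU i⟩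
  have he' : Function.Injective e' := fun i j hij => he (congrArg Subtype.val hij)
  obtain ⟨T, hTS, hT, b, hb⟩ := hcal (range e') (by rw [mk_range_eq e' he', hI])
  refine ⟨e' ⁻¹' T, ?_, (OrderDual.ofDual b).1, (OrderDual.ofDual b).2, fun j hj => hb hj⟩
  exact Infinite.of_image e' (by rwa [image_preimage_eq_of_subset hTS])

section Trace

variable {X : Type u} [UniformSpace X] {A : Set X} {κ : Cardinal.{u}}

theorem exists_seq_of_forall_not_hasBasis {O : Type u} [LinearOrder O] [WellFoundedLT O]
    (hO : ∀ i : O, #(Iio i) ≤ κ)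
    (h : ∀ 𝔅 : Set (Set (X × X)), #𝔅 ≤ κ →
      ¬(𝓤 A).HasBasis (· ∈ 𝔅) (Prod.map Subtype.val Subtype.val ⁻¹' ·)) :
    ∃ ι : O → Set (X × X), (∀ i, ι i ∈ 𝓤 X) ∧ ∀ a b, a < b →
      ∃ q : A × A, Prod.map Subtype.val Subtype.val q ∈ ι a \ (ι b ○ (ι b ○ ι b)) := by
  have escape : ∀ 𝔅 : Set (Set (X × X)), #𝔅 ≤ κ → (∀ V ∈ 𝔅, V ∈ 𝓤 X) →
      ∃ W ∈ 𝓤 X, ∀ V ∈ 𝔅, ∃ q : A × A, Prod.map Subtype.val Subtype.val q ∈ V \ W := by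
    intro 𝔅 h𝔅 h𝔅U
    by_contra! hbasis
    refine h 𝔅 h𝔅 (((𝓤 X).basis_sets.comap _).to_hasBasis (fun W hW => ?_)
      fun V hV => ⟨V, h𝔅U V hV, subset_rfl⟩)
    obtain ⟨V, hV, hVW⟩ := hbasis W hW
    exact ⟨V, hV, fun q hq => by_contra fun hqW => hVW q ⟨hq, hqW⟩⟩
  let E := {U : Set (X × X) // U ∈ 𝓤 X}
  have : Nonempty E := ⟨⟨univ, univ_mem⟩⟩
  obtain ⟨ι, hι⟩ := WellFoundedLT.exists_forall_range_Iio (O := O)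
    (fun (s : Set E) (U : E) => ∀ V ∈ s,
      ∃ q : A × A, Prod.map Subtype.val Subtype.val q ∈ V.1 \ (U.1 ○ (U.1 ○ U.1)))
    fun i g => by
      have hcard : #(Subtype.val '' range g) ≤ κ := mk_image_le.trans (mk_range_le.trans (hO i))
      obtain ⟨W, hW, hWV⟩ := escape _ hcard (by rintro _ ⟨V, -, rfl⟩; exact V.2)
      obtain ⟨U, hU, hUW⟩ := comp3_mem_uniformity hW
      refine ⟨⟨U, hU⟩, fun V hV => ?_⟩
      obtain ⟨q, hqV, hqW⟩ := hWV V.1 (mem_image_of_mem _ hV)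
      exact ⟨q, hqV, fun hq => hqW (hUW hq)⟩
  exact ⟨fun i => (ι i).1, fun i => (ι i).2, fun a b hab => hι b (ι a) ⟨⟨a, hab⟩, rfl⟩⟩

theorem exists_hasBasis_uniformity_subtype_of_calibre
    (hcal : Calibre (EntouragePoset X) (Order.succ κ)) (hA : TotallyBounded (univ : Set A)) :
    ∃ 𝔅 : Set (Set (X × X)), #𝔅 ≤ κ ∧
      (𝓤 A).HasBasis (· ∈ 𝔅) (Prod.map Subtype.val Subtype.val ⁻¹' ·) := by
  by_contra! hno
  have hO (i : (Order.succ κ).ord.ToType) : #(Iio i) ≤ κ := Order.lt_succ_iff.1 <|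
    (mk_Iio_lt i (by rw [mk_ord_toType, Ordinal.type_toType])).trans_eq (mk_ord_toType _)
  obtain ⟨ι, hιU, hι⟩ := exists_seq_of_forall_not_hasBasis hO hno
  choose q hq using hι
  have hι_inj : Function.Injective ι := .of_lt_imp_ne fun a b hab he => by
    have := isRefl_of_mem_uniformity (hιU b)
    exact (hq a b hab).2 (SetRel.right_subset_comp (SetRel.right_subset_comp (he ▸ (hq a b hab).1)))
  obtain ⟨J, hJ, V, hV, hVJ⟩ := hcal.exists_infinite_forall_subset (mk_ord_toType _) hι_inj hιU
  obtain ⟨t, ht, c, hc⟩ := exists_finite_fun_of_totallyBounded hA (preimage_mem_comap hV)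
  have : Infinite J := hJ.to_subtype
  have : Finite t := ht.to_subtype
  obtain ⟨a, b, d, hab, hbd, hcol⟩ := exists_lt_lt_eq_of_finite fun (a b : J) (hab : a < b) =>
    (c (q a b hab).1, c (q a b hab).2)
  obtain ⟨h₁, h₂⟩ := Prod.mk.inj hcol
  -- `q a b` is `V`-close to `q b d ∈ ι b` on both sides, and `V ⊆ ι b`
  have hVb : V ⊆ ι b := hVJ b b.2
  refine (hq a b hab).2 (SetRel.comp_subset_comp hVb (SetRel.comp_subset_comp subset_rfl hVb) ?_)
  have h₁' : (((q a b hab).1 : X), ((q b d hbd).1 : X)) ∈ V := hc _ _ h₁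
  have h₂' : (((q b d hbd).2 : X), ((q a b hab).2 : X)) ∈ V := hc _ _ h₂.symm
  exact SetRel.prodMk_mem_comp h₁' (SetRel.prodMk_mem_comp ((hq b d hbd).1) h₂')

end Trace

/-- If the entourage poset of a uniform space has calibre `(κ⁺, ω)`, then every
pseudocompact subspace has a topological base of cardinality at most `κ`. -/
theorem stmt12 {X : Type u} [UniformSpace X]
    (κ : Cardinal.{u}) (hκ : ℵ₀ ≤ κ)
    (hcal : Calibre (EntouragePoset X) (Order.succ κ))
    (A : Set X)
    (hpc : ∀ f : A → ℝ, Continuous f → ∃ C : ℝ, ∀ x : A, |f x| ≤ C) :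
    ∃ B : Set (Set A), #B ≤ κ ∧ TopologicalSpace.IsTopologicalBasis B := by
  have hA : TotallyBounded (univ : Set A) := totallyBounded_univ_of_forall_bounded hpc
  obtain ⟨𝔅, h𝔅, hbasis⟩ := exists_hasBasis_uniformity_subtype_of_calibre hcal hA
  exact exists_isTopologicalBasis_card_le_of_hasBasis hA hκ hbasis h𝔅
end

section
/- Let G be a topological group (a group with a topology making multiplication and inversion continuous) with identity e, and let κ be an infinite cardinal. Suppose N_e, the set of all neighborhoods of e in G ordered by reverse inclusion, has calibre (κ⁺, ω), where κ⁺ is the successor cardinal of κ. If A ⊆ G is precompact, meaning that for every neighborhood U of e there is a finite set F ⊆ G with A ⊆ ⋃_{g∈F} gU, then A, with the subspace topology, has a topological base of cardinality at most κ. -/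
open Set Topology Cardinal

universe u

/-!
Write `x⁻¹ * y ∈ D` for "`x` and `y` are `D`-close". It suffices to find at most `κ` neighborhoods
`D i` of `1` such that on `A` every neighborhood `U` of `1` contains the closeness relation of some
`D i`: then the traces on `A` of the finitely many translates `g • E i` covering `A`, where
`E i⁻¹ * E i ⊆ D i`, form a base of size at most `κ`.

If no such family exists, a transfinite recursion of length `κ⁺` produces neighborhoods `V b`
such that for every finite set `S` of earlier indices some pair of points of `A` is
`⋂_{a ∈ S} V a`-close but not `V b ^ 3`-close. These `V b` are pairwise distinct, so by the
calibre infinitely many of them, and hence those along an increasing sequence `v n`, contain one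
neighborhood `W`. Let `(xₙ, yₙ)` be the pair chosen for `v (n + 1)` and `{v 0, …, v n}`. By
precompactness there are `n < m` with `xₙ, xₘ` and `yₙ, yₘ` both `W`-close, and then
`xₙ⁻¹ yₙ = (xₙ⁻¹ xₘ) (xₘ⁻¹ yₘ) (yₘ⁻¹ yₙ) ∈ V (v (n + 1)) ^ 3`, a contradiction.
-/

open Pointwise

theorem WellFoundedLT.exists_fun_of_forall_exists_restrict {β α : Type*} [Preorder β]
    [WellFoundedLT β] (P : (b : β) → (Iio b → α) → α → Prop) (h : ∀ b f, ∃ a, P b f a) :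
    ∃ F : β → α, ∀ b, P b (fun a => F a) (F b) := by
  choose c hc using h
  refine ⟨wellFounded_lt.fix fun b ih => c b fun a => ih a a.2, fun b => ?_⟩
  rw [WellFounded.fix_eq]
  exact hc _ _

theorem Set.Infinite.exists_strictMono_mem {β : Type*} [LinearOrder β] [WellFoundedLT β]
    {T : Set β} (hT : T.Infinite) : ∃ v : ℕ → β, StrictMono v ∧ ∀ n, v n ∈ T := by
  let e := Set.Infinite.natEmbedding T hT
  obtain ⟨g, hg⟩ := wellQuasiOrdered_le.exists_monotone_subseq fun n => (e n : β)
  refine ⟨fun n => e (g n), ?_, fun n => (e (g n)).2⟩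
  exact Monotone.strictMono_of_injective (fun m n hmn => hg m n hmn)
    (Subtype.val_injective.comp (e.injective.comp g.injective))

section LeftUniformity

variable {G : Type u} [Group G]

def IsLeftEscaping {β : Type*} [LT β] (A : Set G) (V : β → Set G) : Prop :=
  ∀ b (S : Finset β), (∀ a ∈ S, a < b) →
    ∃ x ∈ A, ∃ y ∈ A, (∀ a ∈ S, x⁻¹ * y ∈ V a) ∧ x⁻¹ * y ∉ V b * V b * V b

theorem IsLeftEscaping.injective {A : Set G} {β : Type*} [LinearOrder β] {V : β → Set G}
    (hV : IsLeftEscaping A V) (hV1 : ∀ b, (1 : G) ∈ V b) : Function.Injective V := by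
  refine Function.Injective.of_lt_imp_ne fun a b hab hVab => ?_
  obtain ⟨x, -, y, -, hxy, hnot⟩ := hV b {a} (by simpa using hab)
  have hb : x⁻¹ * y ∈ V b := hVab ▸ hxy a (Finset.mem_singleton_self a)
  exact hnot (by simpa using mul_mem_mul (mul_mem_mul hb (hV1 b)) (hV1 b))

variable [TopologicalSpace G] [IsTopologicalGroup G]

theorem exists_open_nhds_one_inv_mul_subset {U : Set G} (hU : U ∈ 𝓝 1) :
    ∃ V : Set G, IsOpen V ∧ 1 ∈ V ∧ V⁻¹ * V ⊆ U := by
  obtain ⟨W, hW, -, hWinv, hWU⟩ := exists_closed_nhds_one_inv_eq_mul_subset hU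
  refine ⟨interior W, isOpen_interior, mem_interior_iff_mem_nhds.2 hW, ?_⟩
  calc (interior W)⁻¹ * interior W ⊆ W⁻¹ * W :=
      mul_subset_mul (inv_subset_inv.2 interior_subset) interior_subset
    _ ⊆ U := by rwa [hWinv]

def IsLeftPrecompact (A : Set G) : Prop :=
  ∀ U ∈ 𝓝 (1 : G), ∃ F : Set G, F.Finite ∧ A ⊆ ⋃ g ∈ F, (fun x => g * x) '' U

def IsLeftUniformBasisOn {ι : Type*} (A : Set G) (D : ι → Set G) : Prop :=
  (∀ i, D i ∈ 𝓝 1) ∧ ∀ U ∈ 𝓝 (1 : G), ∃ i, ∀ x ∈ A, ∀ y ∈ A, x⁻¹ * y ∈ D i → x⁻¹ * y ∈ U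

variable {A : Set G}

theorem IsLeftPrecompact.exists_lt_inv_mul_mem (hA : IsLeftPrecompact A) {W : Set G}
    (hW : W ∈ 𝓝 1) {x y : ℕ → G} (hx : ∀ n, x n ∈ A) (hy : ∀ n, y n ∈ A) :
    ∃ n m, n < m ∧ (x n)⁻¹ * x m ∈ W ∧ (y m)⁻¹ * y n ∈ W := by
  obtain ⟨V, hVo, hV1, hVW⟩ := exists_open_nhds_one_inv_mul_subset hW
  obtain ⟨F, hF, hAF⟩ := hA V (hVo.mem_nhds hV1)
  have hcell : ∀ a ∈ A, ∃ g ∈ F, g⁻¹ * a ∈ V := fun a ha => by simpa using hAF ha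
  have hclose : ∀ {a b g : G}, g⁻¹ * a ∈ V → g⁻¹ * b ∈ V → a⁻¹ * b ∈ W := fun ha hb =>
    hVW (by simpa [mul_assoc] using mul_mem_mul (inv_mem_inv.2 ha) hb)
  choose gx hgxF hgx using fun n => hcell (x n) (hx n)
  choose gy hgyF hgy using fun n => hcell (y n) (hy n)
  obtain ⟨n, m, hnm, hcells⟩ := (hF.prod hF).exists_lt_map_eq_of_forall_mem
    (f := fun n => (gx n, gy n)) (t := F ×ˢ F) fun n => ⟨hgxF n, hgyF n⟩
  obtain ⟨hgxnm, hgynm⟩ := Prod.mk.inj hcells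
  exact ⟨n, m, hnm, hclose (hgx n) (hgxnm ▸ hgx m), hclose (hgynm ▸ hgy m) (hgy n)⟩

theorem IsLeftPrecompact.exists_not_subset_of_isLeftEscaping (hA : IsLeftPrecompact A)
    {β : Type*} [LinearOrder β] {V : β → Set G} (hV : IsLeftEscaping A V) {v : ℕ → β}
    (hv : StrictMono v) {W : Set G} (hW : W ∈ 𝓝 1) : ∃ n, ¬W ⊆ V (v n) := by
  by_contra! hWV
  have hpair : ∀ n, ∃ x ∈ A, ∃ y ∈ A, (∀ k ≤ n, x⁻¹ * y ∈ V (v k)) ∧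
      x⁻¹ * y ∉ V (v (n + 1)) * V (v (n + 1)) * V (v (n + 1)) := fun n => by
    obtain ⟨x, hx, y, hy, hxy, hnot⟩ := hV (v (n + 1)) ((Finset.range (n + 1)).image v)
      (by simpa [Nat.lt_succ_iff] using fun k hk => hv (Nat.lt_succ_of_le hk))
    exact ⟨x, hx, y, hy, fun k hk => hxy _ (by simpa [Nat.lt_succ_iff] using ⟨k, hk, rfl⟩), hnot⟩
  choose x hx y hy hxy hnot using hpair
  obtain ⟨n, m, hnm, hxnm, hymn⟩ := hA.exists_lt_inv_mul_mem hW hx hy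
  refine hnot n ?_
  have hfactors : (x n)⁻¹ * y n = (x n)⁻¹ * x m * ((x m)⁻¹ * y m) * ((y m)⁻¹ * y n) := by group
  rw [hfactors]
  exact mul_mem_mul (mul_mem_mul (hWV _ hxnm) (hxy m (n + 1) hnm)) (hWV _ hymn)

theorem exists_nhds_escaping_of_forall_not_isLeftUniformBasisOn {κ : Cardinal.{u}}
    (hκ : ℵ₀ ≤ κ) (hA : ∀ (ι : Type u) (D : ι → Set G), #ι ≤ κ → ¬IsLeftUniformBasisOn A D)
    {ι : Type u} (hι : #ι ≤ κ) {g : ι → Set G} (hg : ∀ i, g i ∈ 𝓝 1) :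
    ∃ V ∈ 𝓝 (1 : G), ∀ S : Finset ι,
      ∃ x ∈ A, ∃ y ∈ A, (∀ i ∈ S, x⁻¹ * y ∈ g i) ∧ x⁻¹ * y ∉ V * V * V := by
  classical
  have hcard : #(Finset ι) ≤ κ :=
    (mk_le_of_surjective List.toFinset_surjective).trans ((mk_list_le_max ι).trans (max_le hκ hι))
  obtain ⟨U, hU, hUS⟩ : ∃ U ∈ 𝓝 (1 : G), ∀ S : Finset ι,
      ∃ x ∈ A, ∃ y ∈ A, x⁻¹ * y ∈ ⋂ i ∈ S, g i ∧ x⁻¹ * y ∉ U := by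
    by_contra! h
    exact hA _ (fun S : Finset ι => ⋂ i ∈ S, g i) hcard
      ⟨fun S => (S.iInter_mem_sets).2 fun i _ => hg i, h⟩
  obtain ⟨V, hV, hVU⟩ := exists_nhds_one_split4 hU
  refine ⟨V, hV, fun S => ?_⟩
  obtain ⟨x, hx, y, hy, hxy, hnot⟩ := hUS S
  refine ⟨x, hx, y, hy, by simpa using hxy, ?_⟩
  rintro ⟨_, ⟨a, ha, b, hb, rfl⟩, c, hc, habc⟩
  exact hnot (habc ▸ by simpa using hVU ha hb hc (mem_of_mem_nhds hV))

theorem exists_isLeftEscaping_of_forall_not_isLeftUniformBasisOn {κ : Cardinal.{u}}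
    (hκ : ℵ₀ ≤ κ) (hA : ∀ (ι : Type u) (D : ι → Set G), #ι ≤ κ → ¬IsLeftUniformBasisOn A D)
    {β : Type u} [LinearOrder β] [WellFoundedLT β] (hβ : ∀ b : β, #(Iio b) ≤ κ) :
    ∃ V : β → Set G, (∀ b, V b ∈ 𝓝 1) ∧ IsLeftEscaping A V := by
  obtain ⟨V, hV⟩ := WellFoundedLT.exists_fun_of_forall_exists_restrict
    (α := {U : Set G // U ∈ 𝓝 1})
    (fun b f U => ∀ S : Finset (Iio b), ∃ x ∈ A, ∃ y ∈ A,
      (∀ a ∈ S, x⁻¹ * y ∈ (f a).1) ∧ x⁻¹ * y ∉ U.1 * U.1 * U.1)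
    fun b f => by
      obtain ⟨U, hU, hUS⟩ :=
        exists_nhds_escaping_of_forall_not_isLeftUniformBasisOn hκ hA (hβ b) fun a => (f a).2
      exact ⟨⟨U, hU⟩, hUS⟩
  refine ⟨fun b => (V b).1, fun b => (V b).2, fun b S hS => ?_⟩
  obtain ⟨x, hx, y, hy, hxy, hnot⟩ := hV b (S.subtype (· < b))
  exact ⟨x, hx, y, hy, fun a ha => hxy ⟨a, hS a ha⟩ (Finset.mem_subtype.2 ha), hnot⟩

theorem IsLeftPrecompact.exists_isLeftUniformBasisOn_of_calibre {κ : Cardinal.{u}}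
    (hκ : ℵ₀ ≤ κ) (hcal : Calibre (NbhdPoset (1 : G)) (Order.succ κ))
    (hA : IsLeftPrecompact A) :
    ∃ (ι : Type u) (D : ι → Set G), #ι ≤ κ ∧ IsLeftUniformBasisOn A D := by
  by_contra! hno
  obtain ⟨V, hV1, hV⟩ := exists_isLeftEscaping_of_forall_not_isLeftUniformBasisOn
    (β := (Order.succ κ).ord.ToType) hκ hno
    fun b => Order.lt_succ_iff.1 (by simpa using mk_Iio_lt b (by simp))
  let f : (Order.succ κ).ord.ToType → NbhdPoset (1 : G) := fun b => OrderDual.toDual ⟨V b, hV1 b⟩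
  have hf : Function.Injective f := fun a b hab =>
    hV.injective (fun b => mem_of_mem_nhds (hV1 b)) (congrArg (fun U => U.1) hab)
  obtain ⟨T, hTf, hT, W, hW⟩ := hcal (range f) (by rw [mk_range_eq f hf, mk_ord_toType])
  obtain ⟨v, hv, hvT⟩ := (hT.preimage hTf).exists_strictMono_mem
  obtain ⟨n, hn⟩ := hA.exists_not_subset_of_isLeftEscaping hV hv (OrderDual.ofDual W).2
  exact hn (hW (hvT n))

theorem IsLeftPrecompact.exists_isTopologicalBasis_card_le (hA : IsLeftPrecompact A)
    {κ : Cardinal.{u}} (hκ : ℵ₀ ≤ κ) {ι : Type u} {D : ι → Set G} (hι : #ι ≤ κ)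
    (hD : IsLeftUniformBasisOn A D) :
    ∃ B : Set (Set A), #B ≤ κ ∧ TopologicalSpace.IsTopologicalBasis B := by
  choose E hEo hE1 hED using fun i => exists_open_nhds_one_inv_mul_subset (hD.1 i)
  choose F hF hAF using fun i => hA (E i) ((hEo i).mem_nhds (hE1 i))
  refine ⟨⋃ i, (fun g => ((↑) : A → G) ⁻¹' ((fun x => g * x) '' E i)) '' F i, ?_, ?_⟩
  · refine (mk_iUnion_le _).trans (mul_le_of_le hκ hι ?_)
    exact ciSup_le' fun i => ((hF i).image _).lt_aleph0.le.trans hκ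
  refine TopologicalSpace.isTopologicalBasis_of_isOpen_of_nhds ?_ fun a O haO hO => ?_
  · simp only [mem_iUnion, mem_image]
    rintro _ ⟨i, g, -, rfl⟩
    exact (isOpenMap_mul_left g _ (hEo i)).preimage continuous_subtype_val
  obtain ⟨O', hO', rfl⟩ := isOpen_induced_iff.1 hO
  obtain ⟨i, hi⟩ := hD.2 _ ((hO'.preimage (continuous_const_mul (a : G))).mem_nhds
    (by simpa using haO))
  obtain ⟨g, hg, hga⟩ : ∃ g ∈ F i, g⁻¹ * a ∈ E i := by simpa using hAF i a.2
  refine ⟨_, mem_iUnion.2 ⟨i, g, hg, rfl⟩, by simpa using hga, fun b hb => ?_⟩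
  have hgb : g⁻¹ * b ∈ E i := by simpa using hb
  have hab : (a : G)⁻¹ * b ∈ D i :=
    hED i (by simpa [mul_assoc] using mul_mem_mul (inv_mem_inv.2 hga) hgb)
  simpa using hi a a.2 b b.2 hab

end LeftUniformity

/-- In a topological group whose neighborhood filter of the identity has calibre
`(κ⁺, ω)`, every precompact subset has a topological base of cardinality at most `κ`. -/
theorem stmt13 {G : Type u} [Group G] [TopologicalSpace G] [IsTopologicalGroup G]
    (κ : Cardinal.{u}) (hκ : ℵ₀ ≤ κ)
    (hcal : Calibre (NbhdPoset (1 : G)) (Order.succ κ))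
    (A : Set G)
    (hpre : ∀ U ∈ nhds (1 : G), ∃ F : Set G, F.Finite ∧
      A ⊆ ⋃ g ∈ F, (fun x => g * x) '' U) :
    ∃ B : Set (Set A), #B ≤ κ ∧ TopologicalSpace.IsTopologicalBasis B := by
  obtain ⟨ι, D, hι, hD⟩ := IsLeftPrecompact.exists_isLeftUniformBasisOn_of_calibre hκ hcal hpre
  exact IsLeftPrecompact.exists_isTopologicalBasis_card_le hpre hκ hι hD
end

section
/- Let X be a compact Hausdorff space and κ an infinite cardinal. Then X has a topological base of cardinality at most κ if and only if N_Δ, the set of all neighborhoods of the diagonal in X × X ordered by reverse inclusion, has calibre (κ⁺, ω), where κ⁺ is the successor cardinal of κ. -/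
open Set Topology Cardinal

universe u

/- ### Auxiliary lemmas -/

/-- Pigeonhole: a map from a type of size `≥ κ⁺` to a type of size `≤ κ` has an
infinite fiber. -/
lemma aux_infinite_fiber {α β : Type u} {κ : Cardinal.{u}} (hκ : ℵ₀ ≤ κ) (f : α → β)
    (hα : Order.succ κ ≤ #α) (hβ : #β ≤ κ) : ∃ b, {a | f a = b}.Infinite := by
  by_contra h
  push_neg at h
  have h1 : #α = Cardinal.sum (fun b : β => #{a // f a = b}) := by
    rw [← Cardinal.mk_sigma]
    exact Cardinal.mk_congr (Equiv.sigmaFiberEquiv f).symm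
  have h2 : Cardinal.sum (fun b : β => #{a // f a = b}) ≤ Cardinal.sum (fun _ : β => ℵ₀) :=
    Cardinal.sum_le_sum _ _ (fun b => le_of_lt (Set.Finite.lt_aleph0 (h b)))
  rw [Cardinal.sum_const'] at h2
  have h3 : #β * ℵ₀ ≤ κ := by
    calc #β * ℵ₀ ≤ κ * ℵ₀ := mul_le_mul_left hβ _
      _ = κ := Cardinal.mul_eq_left hκ hκ Cardinal.aleph0_ne_zero
  have hfin : Order.succ κ ≤ κ := hα.trans ((le_of_eq h1).trans (h2.trans h3))
  exact absurd (Order.succ_le_iff.mp hfin) (lt_irrefl κ)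

variable {X : Type u} [TopologicalSpace X] [CompactSpace X] [T2Space X]

/-- From an open neighborhood of the diagonal, extract a finite cover of `X` by open
sets whose squares are inside it. -/
lemma aux_box_cover {W : Set (X × X)} (hW : IsOpen W) (hΔ : Set.diagonal X ⊆ W) :
    ∃ (t : Finset X) (N : X → Set X), (∀ x, IsOpen (N x)) ∧ (∀ x, x ∈ N x) ∧
      (∀ x, (N x) ×ˢ (N x) ⊆ W) ∧ ∀ y : X, ∃ x ∈ t, y ∈ N x := by
  have h : ∀ x : X, ∃ N : Set X, IsOpen N ∧ x ∈ N ∧ N ×ˢ N ⊆ W := by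
    intro x
    obtain ⟨u, v, hu, hv, hxu, hxv, huv⟩ := isOpen_prod_iff.mp hW x x (hΔ rfl)
    exact ⟨u ∩ v, hu.inter hv, ⟨hxu, hxv⟩,
      (Set.prod_mono inter_subset_left inter_subset_right).trans huv⟩
  choose N hNo hNx hNW using h
  obtain ⟨t, ht⟩ := isCompact_univ.elim_finite_subcover N hNo
    (fun x _ => Set.mem_iUnion.mpr ⟨x, hNx x⟩)
  refine ⟨t, N, hNo, hNx, hNW, fun y => ?_⟩
  simpa using Set.mem_iUnion₂.mp (ht (Set.mem_univ y))

/-- The core lemma: given calibre `(κ⁺, ω)` of the diagonal poset, there is no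
`ε`-separated family of `[0,1]`-valued continuous functions of size `κ⁺`. -/
lemma aux_core {κ : Cardinal.{u}} (hκ : ℵ₀ ≤ κ)
    (hcal : Calibre (DiagNbhdPoset X) (Order.succ κ))
    {ε : ℝ} (hε : 0 < ε) (F : Set C(X, ℝ))
    (hF1 : ∀ f ∈ F, ∀ x : X, f x ∈ Set.Icc (0:ℝ) 1)
    (hsep : ∀ f ∈ F, ∀ g ∈ F, f ≠ g → ε ≤ dist f g)
    (hFc : #F = Order.succ κ) : False := by
  classical
  set δ : ℝ := ε / 8 with hδdef
  have hδ : 0 < δ := by positivity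
  set Cs : C(X, ℝ) → Set (X × X) := fun f => {p : X × X | δ ≤ |f p.1 - f p.2|} with hCs
  have hCsClosed : ∀ f : C(X, ℝ), IsClosed (Cs f) := by
    intro f
    have hcont : Continuous fun p : X × X => |f p.1 - f p.2| :=
      ((f.continuous.comp continuous_fst).sub (f.continuous.comp continuous_snd)).abs
    exact isClosed_Ici.preimage hcont
  have hUmem : ∀ f : C(X, ℝ), (Cs f)ᶜ ∈ nhdsSet (Set.diagonal X) := by
    intro f
    refine (hCsClosed f).isOpen_compl.mem_nhdsSet.mpr ?_
    rintro ⟨x, y⟩ hxy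
    have hxy' : x = y := hxy
    subst hxy'
    simp only [Cs, Set.mem_compl_iff, Set.mem_setOf_eq, sub_self, abs_zero, not_le]
    exact hδ
  -- Key claim: every open neighborhood of the diagonal avoids only finitely many `Cs f`.
  have star : ∀ W : Set (X × X), IsOpen W → Set.diagonal X ⊆ W →
      {f : C(X, ℝ) | f ∈ F ∧ Cs f ∩ W = ∅}.Finite := by
    intro W hWo hWΔ
    by_contra hinf
    rw [← Set.not_infinite, not_not] at hinf
    obtain ⟨t, N, hNo, hNx, hNW, hcov⟩ := aux_box_cover hWo hWΔ
    set c : ℝ := 4 / ε with hc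
    have hc0 : 0 < c := by positivity
    set G : C(X, ℝ) → (↑t → ℤ) := fun f i => ⌊f i.1 * c⌋ with hG
    have hmaps : Set.MapsTo G {f : C(X, ℝ) | f ∈ F ∧ Cs f ∩ W = ∅}
        (Set.pi Set.univ (fun _ : ↑t => (Set.Icc (0:ℤ) ⌈c⌉))) := by
      intro f hf i _
      have hfi := hF1 f hf.1 i.1
      constructor
      · exact Int.floor_nonneg.mpr (mul_nonneg hfi.1 hc0.le)
      · calc ⌊f i.1 * c⌋ ≤ ⌊c⌋ := Int.floor_le_floor (by nlinarith [hfi.2])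
          _ ≤ ⌈c⌉ := Int.floor_le_ceil c
    have hfin : (Set.pi Set.univ (fun _ : ↑t => (Set.Icc (0:ℤ) ⌈c⌉))).Finite :=
      Set.Finite.pi (fun _ => Set.finite_Icc _ _)
    obtain ⟨f, hf, g, hg, hfg, hGfg⟩ := hinf.exists_ne_map_eq_of_mapsTo hmaps hfin
    -- at sample points the two functions are close
    have hclose : ∀ i : ↑t, |f i.1 - g i.1| ≤ ε / 2 := by
      intro i
      have h1 := Int.floor_le (f i.1 * c)
      have h2 := Int.lt_floor_add_one (f i.1 * c)
      have h3 := Int.floor_le (g i.1 * c)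
      have h4 := Int.lt_floor_add_one (g i.1 * c)
      have heq : ⌊f i.1 * c⌋ = ⌊g i.1 * c⌋ := congrFun hGfg i
      rw [heq] at h1 h2
      have habs : |f i.1 - g i.1| < 1 / c := by
        rw [abs_sub_lt_iff]
        constructor
        · rw [lt_div_iff₀ hc0]; nlinarith
        · rw [lt_div_iff₀ hc0]; nlinarith
      have h1c : 1 / c = ε / 4 := by
        rw [hc]; field_simp
      rw [h1c] at habs
      linarith
    -- everywhere the two functions are close
    have hptwise : ∀ u : X, dist (f u) (g u) ≤ 3 * ε / 4 := by
      intro u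
      obtain ⟨x, hxt, hux⟩ := hcov u
      have hWmem : (u, x) ∈ W := hNW x ⟨hux, hNx x⟩
      have hfu : |f u - f x| < δ := by
        by_contra hcon
        push_neg at hcon
        have hmem : (u, x) ∈ Cs f ∩ W := ⟨hcon, hWmem⟩
        rw [hf.2] at hmem
        exact hmem
      have hgu : |g u - g x| < δ := by
        by_contra hcon
        push_neg at hcon
        have hmem : (u, x) ∈ Cs g ∩ W := ⟨hcon, hWmem⟩
        rw [hg.2] at hmem
        exact hmem
      have hmid : |f x - g x| ≤ ε / 2 := hclose ⟨x, hxt⟩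
      rw [Real.dist_eq]
      have tri : |f u - g u| ≤ |f u - f x| + |f x - g x| + |g x - g u| := by
        calc |f u - g u| ≤ |f u - g x| + |g x - g u| := abs_sub_le _ _ _
          _ ≤ (|f u - f x| + |f x - g x|) + |g x - g u| := by
              gcongr
              exact abs_sub_le _ _ _
      have hcomm : |g x - g u| = |g u - g x| := abs_sub_comm _ _
      rw [hcomm] at tri
      have hδ8 : δ = ε / 8 := rfl
      linarith
    have hdist : dist f g ≤ 3 * ε / 4 :=
      (ContinuousMap.dist_le (by positivity)).mpr hptwise
    have := hsep f hf.1 g hg.1 hfg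
    linarith
  -- Build the family of neighborhoods and apply calibre.
  set φ : ↥F → DiagNbhdPoset X := fun f => OrderDual.toDual ⟨(Cs f.1)ᶜ, hUmem f.1⟩ with hφ
  set S : Set (DiagNbhdPoset X) := Set.range φ with hS
  have hFcard : #↥F = Order.succ κ := hFc
  have hSnotle : ¬ (#S ≤ κ) := by
    intro hle
    obtain ⟨s₀, hs₀⟩ := aux_infinite_fiber hκ (Set.rangeFactorization φ) hFcard.ge hle
    have hW₀ : ∀ a : ↥F, Set.rangeFactorization φ a = s₀ →
        (Cs a.1)ᶜ = (OrderDual.ofDual s₀.1).1 := by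
      intro a ha
      have hval : φ a = s₀.1 := congrArg Subtype.val ha
      rw [← hval]
      rfl
    obtain ⟨a₀, ha₀⟩ := hs₀.nonempty
    have hW₀o : IsOpen (OrderDual.ofDual s₀.1).1 := by
      rw [← hW₀ a₀ ha₀]
      exact (hCsClosed a₀.1).isOpen_compl
    have hW₀Δ : Set.diagonal X ⊆ (OrderDual.ofDual s₀.1).1 :=
      subset_of_mem_nhdsSet (OrderDual.ofDual s₀.1).2
    have hfib : {f : C(X, ℝ) | f ∈ F ∧ Cs f ∩ (OrderDual.ofDual s₀.1).1 = ∅}.Infinite := by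
      have hii : Set.InjOn (fun a : ↥F => a.1) {a | Set.rangeFactorization φ a = s₀} :=
        Subtype.val_injective.injOn
      refine Set.Infinite.mono ?_ (hs₀.image hii)
      rintro _ ⟨a, ha, rfl⟩
      refine ⟨a.2, ?_⟩
      rw [← hW₀ a ha]
      exact Set.inter_compl_self _
    exact hfib (star _ hW₀o hW₀Δ)
  have hScard : #S = Order.succ κ := by
    refine le_antisymm ?_ (Order.succ_le_of_lt (not_le.mp hSnotle))
    rw [← hFcard]
    exact Cardinal.mk_range_le
  obtain ⟨T, hTS, hTinf, m, hm⟩ := hcal S hScard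
  set W : Set (X × X) := interior (OrderDual.ofDual m).1 with hWdef
  have hWo : IsOpen W := isOpen_interior
  have hWΔ : Set.diagonal X ⊆ W := subset_interior_iff_mem_nhdsSet.mpr (OrderDual.ofDual m).2
  have hexa : ∀ U : ↥T, ∃ a : ↥F, φ a = U.1 := fun U => hTS U.2
  choose ψ hψ using hexa
  have hTinf' : Infinite ↥T := hTinf.to_subtype
  have himg : {f : C(X, ℝ) | f ∈ F ∧ Cs f ∩ W = ∅}.Infinite := by
    apply Set.infinite_of_injective_forall_mem (f := fun U : ↥T => (ψ U).1)
    · intro U V hUV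
      have h1 : ψ U = ψ V := Subtype.val_injective hUV
      have h2 : U.1 = V.1 := by rw [← hψ U, ← hψ V, h1]
      exact Subtype.val_injective h2
    · intro U
      refine ⟨(ψ U).2, ?_⟩
      have h1 : (OrderDual.ofDual m).1 ⊆ (OrderDual.ofDual U.1).1 := hm U.2
      have h2 : (OrderDual.ofDual U.1).1 = (Cs (ψ U).1)ᶜ := by
        rw [← hψ U]
        rfl
      have h3 : W ⊆ (Cs (ψ U).1)ᶜ := by
        rw [← h2]
        exact interior_subset.trans h1
      rw [Set.eq_empty_iff_forall_notMem]
      intro p hp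
      exact h3 hp.2 hp.1
  exact himg (star W hWo hWΔ)

/-- Under calibre, for every `ε > 0` there is a `κ`-small `ε`-net in the collection of
`[0,1]`-valued continuous functions. -/
lemma aux_net {κ : Cardinal.{u}} (hκ : ℵ₀ ≤ κ)
    (hcal : Calibre (DiagNbhdPoset X) (Order.succ κ))
    {ε : ℝ} (hε : 0 < ε) :
    ∃ D : Set C(X, ℝ), #D ≤ κ ∧ (∀ f ∈ D, ∀ x : X, f x ∈ Set.Icc (0:ℝ) 1) ∧
      ∀ g : C(X, ℝ), (∀ x : X, g x ∈ Set.Icc (0:ℝ) 1) → ∃ f ∈ D, dist f g < ε := by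
  classical
  set 𝒮 : Set (Set C(X, ℝ)) :=
    {D | (∀ f ∈ D, ∀ x : X, f x ∈ Set.Icc (0:ℝ) 1) ∧
      ∀ f ∈ D, ∀ g ∈ D, f ≠ g → ε ≤ dist f g} with h𝒮
  have hzorn : ∀ c ⊆ 𝒮, IsChain (· ⊆ ·) c → ∃ ub ∈ 𝒮, ∀ s ∈ c, s ⊆ ub := by
    intro c hc hchain
    refine ⟨⋃₀ c, ⟨?_, ?_⟩, fun s hs => Set.subset_sUnion_of_mem hs⟩
    · rintro f ⟨s, hs, hfs⟩
      exact (hc hs).1 f hfs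
    · rintro f ⟨s, hs, hfs⟩ g ⟨s', hs', hgs'⟩ hne
      rcases eq_or_ne s s' with rfl | hss'
      · exact (hc hs).2 f hfs g hgs' hne
      · rcases hchain hs hs' hss' with h | h
        · exact (hc hs').2 f (h hfs) g hgs' hne
        · exact (hc hs).2 f hfs g (h hgs') hne
  obtain ⟨D, hD⟩ := zorn_subset 𝒮 hzorn
  · refine ⟨D, ?_, hD.prop.1, ?_⟩
    · by_contra hgt
      push_neg at hgt
      obtain ⟨F, hFD, hFc⟩ := Cardinal.le_mk_iff_exists_subset.mp (Order.succ_le_of_lt hgt)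
      exact aux_core hκ hcal hε F (fun f hf => hD.prop.1 f (hFD hf))
        (fun f hf g hg => hD.prop.2 f (hFD hf) g (hFD hg)) hFc
    · intro g hg
      by_contra hno
      push_neg at hno
      have hgD : g ∉ D := by
        intro hgD
        have := hno g hgD
        simp only [dist_self] at this
        linarith
      have hins : insert g D ∈ 𝒮 := by
        constructor
        · intro f hf
          rcases hf with rfl | hf
          · exact hg
          · exact hD.prop.1 f hf
        · intro f hf g' hg' hne
          rcases hf with rfl | hf <;> rcases hg' with rfl | hg'
          · exact absurd rfl hne
          · rw [dist_comm]
            exact hno g' hg'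
          · exact hno f hf
          · exact hD.prop.2 f hf g' hg' hne
      have hsub := hD.2 hins (Set.subset_insert g D)
      exact hgD (hsub (Set.mem_insert g D))

/-- A compact Hausdorff space has weight at most `κ` if and only if the neighborhood
filter of the diagonal has calibre `(κ⁺, ω)`. -/
theorem stmt15 {X : Type u} [TopologicalSpace X] [CompactSpace X] [T2Space X]
    (κ : Cardinal.{u}) (hκ : ℵ₀ ≤ κ) :
    (∃ B : Set (Set X), TopologicalSpace.IsTopologicalBasis B ∧ #B ≤ κ) ↔
      Calibre (DiagNbhdPoset X) (Order.succ κ) := by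
  classical
  constructor
  · -- base of size ≤ κ gives calibre (κ⁺, ω)
    rintro ⟨B, hB, hBc⟩ S hSc
    have key : ∀ U : ↥S, ∃ t : Finset ↥B, (∀ x : X, ∃ j ∈ t, x ∈ (j : Set X)) ∧
        ∀ j ∈ t, (j : Set X) ×ˢ (j : Set X) ⊆ (OrderDual.ofDual U.1).1 := by
      intro U
      have hV : (OrderDual.ofDual U.1).1 ∈ nhdsSet (Set.diagonal X) := (OrderDual.ofDual U.1).2
      have hVi : Set.diagonal X ⊆ interior (OrderDual.ofDual U.1).1 :=
        subset_interior_iff_mem_nhdsSet.mpr hV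
      have hbx : ∀ x : X, ∃ j : ↥B, x ∈ (j : Set X) ∧
          (j : Set X) ×ˢ (j : Set X) ⊆ interior (OrderDual.ofDual U.1).1 := by
        intro x
        obtain ⟨u, v, hu, hv, hxu, hxv, huv⟩ :=
          isOpen_prod_iff.mp isOpen_interior x x (hVi rfl)
        obtain ⟨b, hbB, hxb, hbw⟩ :=
          hB.exists_subset_of_mem_open (⟨hxu, hxv⟩ : x ∈ u ∩ v) (hu.inter hv)
        exact ⟨⟨b, hbB⟩, hxb,
          (Set.prod_mono (hbw.trans inter_subset_left) (hbw.trans inter_subset_right)).trans huv⟩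
      choose j hj1 hj2 using hbx
      obtain ⟨t0, ht0⟩ := isCompact_univ.elim_finite_subcover (fun x : X => (j x : Set X))
        (fun x => hB.isOpen (j x).2) (fun x _ => Set.mem_iUnion.mpr ⟨x, hj1 x⟩)
      refine ⟨t0.image j, ?_, ?_⟩
      · intro x
        obtain ⟨y, hyt, hxy⟩ := by simpa using Set.mem_iUnion₂.mp (ht0 (Set.mem_univ x))
        exact ⟨j y, Finset.mem_image_of_mem j hyt, hxy⟩
      · intro jj hjj
        obtain ⟨y, _, rfl⟩ := Finset.mem_image.mp hjj
        exact (hj2 y).trans interior_subset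
    choose tf htf1 htf2 using key
    have hcard : #(Finset ↥B) ≤ κ := by
      rcases finite_or_infinite ↥B with h | h
      · haveI := Fintype.ofFinite ↥B
        exact le_trans (le_of_lt (Cardinal.lt_aleph0_of_finite _)) hκ
      · rw [Cardinal.mk_finset_of_infinite]
        exact hBc
    obtain ⟨s₀, hs₀⟩ := aux_infinite_fiber hκ tf hSc.ge hcard
    obtain ⟨V₀, hV₀⟩ := hs₀.nonempty
    refine ⟨Subtype.val '' {V : ↥S | tf V = s₀}, ?_, ?_, ?_⟩
    · rintro _ ⟨V, _, rfl⟩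
      exact V.2
    · exact hs₀.image Subtype.val_injective.injOn
    · -- bounded above by the union of boxes from `s₀`
      have hm0o : IsOpen (⋃ jj ∈ s₀, (jj : Set X) ×ˢ (jj : Set X)) :=
        isOpen_biUnion fun jj _ => (hB.isOpen jj.2).prod (hB.isOpen jj.2)
      have hm0Δ : Set.diagonal X ⊆ ⋃ jj ∈ s₀, (jj : Set X) ×ˢ (jj : Set X) := by
        rintro ⟨x, y⟩ hxy
        have hxy' : x = y := hxy
        subst hxy'
        obtain ⟨jj, hjs, hxj⟩ := htf1 V₀ x
        rw [hV₀] at hjs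
        exact Set.mem_biUnion hjs ⟨hxj, hxj⟩
      refine ⟨OrderDual.toDual ⟨_, hm0o.mem_nhdsSet.mpr hm0Δ⟩, ?_⟩
      rintro V ⟨V', hV', rfl⟩
      intro p hp
      obtain ⟨jj, hjs, hpj⟩ := Set.mem_iUnion₂.mp hp
      refine htf2 V' jj ?_ hpj
      rw [hV']
      exact hjs
  · -- calibre gives a base of size ≤ κ
    intro hcal
    obtain ⟨D, hDc, hD01, hDap⟩ := aux_net hκ hcal (ε := 1/8) (by norm_num)
    refine ⟨(fun f : C(X, ℝ) => f ⁻¹' (Set.Ioo (1/2 : ℝ) 2)) '' D, ?_,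
      le_trans Cardinal.mk_image_le hDc⟩
    apply TopologicalSpace.isTopologicalBasis_of_isOpen_of_nhds
    · rintro u ⟨f, _, rfl⟩
      exact isOpen_Ioo.preimage f.continuous
    · intro x U hxU hUo
      obtain ⟨g, hg0, hg1, hg01⟩ := exists_continuous_zero_one_of_isClosed
        (isClosed_compl_iff.mpr hUo) (isClosed_singleton (x := x))
        (Set.disjoint_singleton_right.mpr (fun hx => hx hxU))
      obtain ⟨f, hfD, hfg⟩ := hDap g hg01
      have hdx : ∀ y : X, dist (f y) (g y) < 1/8 :=
        fun y => lt_of_le_of_lt (ContinuousMap.dist_apply_le_dist y) hfg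
      refine ⟨f ⁻¹' (Set.Ioo (1/2 : ℝ) 2), Set.mem_image_of_mem _ hfD, ?_, ?_⟩
      · have hgx : g x = 1 := hg1 rfl
        have := hdx x
        rw [Real.dist_eq, hgx] at this
        have hfx1 : f x ≤ 1 := (hD01 f hfD x).2
        constructor
        · have := abs_lt.mp this
          linarith [this.1, this.2]
        · linarith
      · intro y hy
        by_contra hyU
        have hgy : g y = 0 := hg0 hyU
        have := hdx y
        rw [Real.dist_eq, hgy, sub_zero] at this
        have hy1 : (1:ℝ)/2 < f y := hy.1
        have := abs_lt.mp this
        linarith [this.1, this.2]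
end

section
/- Let X be a completely regular Hausdorff space such that N_Δ, the set of all neighborhoods of the diagonal in X × X ordered by reverse inclusion, has calibre (ω₁, ω). If X is countably compact (every countable open cover of X has a finite subcover), then X is compact. -/
/-!
Countable compactness together with the Lindelöf property gives compactness, so it suffices to
show that `X` is Lindelöf. If a neighbourhood assignment `x ↦ U x` had no countable subcover, one
could choose points `x α`, `α < ω₁`, with `x α ∉ U (x β)` for `β < α`. The sets
`W α = ({x α} ×ˢ (interior (U (x α)))ᶜ)ᶜ` are neighbourhoods of the diagonal, and by the calibre
a single neighbourhood `V` of the diagonal lies in `W α` for infinitely many `α`. A cluster point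
of these `x α` yields `γ < δ` with `(x γ, x δ) ∈ V ⊆ W γ`, contradicting `x δ ∉ U (x γ)`.
-/

open Set Topology Cardinal

universe u

theorem Calibre.exists_infinite_bddAbove_image {P ι : Type u} [Preorder P]
    (hP : Calibre P ℵ₁) (hι : #ι = ℵ₁) (w : ι → P) :
    ∃ A : Set ι, A.Infinite ∧ BddAbove (w '' A) := by
  by_cases hw : #(range w) = ℵ₁
  · obtain ⟨T, hTw, hT, hTbdd⟩ := hP (range w) hw
    exact ⟨w ⁻¹' T, hT.preimage hTw, hTbdd.mono (image_preimage_subset w T)⟩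
  · have : Infinite ι := Cardinal.infinite_iff.2 (hι ▸ aleph0_lt_aleph_one.le)
    obtain ⟨t, ht⟩ := exists_infinite_fiber (rangeFactorization w)
      (mk_range_le.lt_of_ne (hι ▸ hw))
    refine ⟨_, infinite_coe_iff.1 ht, t, ?_⟩
    rintro _ ⟨α, hα, rfl⟩
    exact (congrArg Subtype.val hα).le

theorem exists_forall_lt_notMem_of_countable {ι X : Type*} [LinearOrder ι] [WellFoundedLT ι]
    (hι : ∀ α : ι, (Iio α).Countable) (U : X → Set X)
    (hU : ∀ C : Set X, C.Countable → ⋃ x ∈ C, U x ≠ Set.univ) :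
    ∃ x : ι → X, ∀ β α, β < α → x α ∉ U (x β) := by
  choose next hnext using fun C hC => (ne_univ_iff_exists_notMem _).1 (hU C hC)
  have hrange (α : ι) (y : ∀ β < α, X) : (range fun β : Iio α => y β β.2).Countable :=
    have := (hι α).to_subtype
    countable_range _
  let x : ι → X := WellFoundedLT.fix fun α y => next _ (hrange α y)
  have hx (α : ι) : x α = next (range fun β : Iio α => x β) (hrange α fun β _ => x β) :=
    WellFoundedLT.fix_eq _ α
  refine ⟨x, fun β α hβα hβ => hnext _ (hrange α fun γ _ => x γ) ?_⟩
  rw [← hx]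
  exact mem_biUnion (mem_range_self (f := fun γ : Iio α => x γ) ⟨β, hβα⟩) hβ

theorem compl_prod_mem_nhdsSet_diagonal {X : Type*} [TopologicalSpace X] {s t : Set X}
    (hs : IsClosed s) (ht : IsClosed t) (hst : Disjoint s t) :
    (s ×ˢ t)ᶜ ∈ 𝓝ˢ (diagonal X) :=
  (hs.prod ht).isOpen_compl.mem_nhdsSet.2 fun _ hp hpst =>
    hst.ne_of_mem hpst.1 hpst.2 hp

theorem CountablyCompactSpace.exists_ne_prod_mem_of_infinite {X ι : Type*} [TopologicalSpace X]
    [CountablyCompactSpace X] (x : ι → X) {A : Set ι} (hA : A.Infinite) {V : Set (X × X)}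
    (hV : V ∈ 𝓝ˢ (diagonal X)) : ∃ γ ∈ A, ∃ δ ∈ A, γ ≠ δ ∧ (x γ, x δ) ∈ V ∧ (x δ, x γ) ∈ V := by
  let e := hA.natEmbedding
  obtain ⟨z, -, hz⟩ := isCountablyCompact_univ.seq_clusterPt (fun n => x (e n))
    (.of_forall fun _ => mem_univ _)
  have hVz : V ∈ 𝓝 z ×ˢ 𝓝 z := by
    simpa only [nhds_prod_eq] using mem_nhdsSet_iff_forall.1 hV (z, z) rfl
  obtain ⟨u, hu, huV⟩ := Filter.mem_prod_self_iff.1 hVz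
  obtain ⟨m, hm, n, hn, hmn⟩ := (Nat.frequently_atTop_iff_infinite.1 (hz.frequently hu)).nontrivial
  exact ⟨e m, (e m).2, e n, (e n).2, fun h => hmn (e.injective (Subtype.ext h)),
    huV ⟨hm, hn⟩, huV ⟨hn, hm⟩⟩

theorem countablyCompactSpace_of_countable_subcover {X : Type*} [TopologicalSpace X]
    (h : ∀ 𝒰 : Set (Set X), 𝒰.Countable → (∀ U ∈ 𝒰, IsOpen U) →
      ⋃₀ 𝒰 = Set.univ → ∃ F ⊆ 𝒰, F.Finite ∧ ⋃₀ F = Set.univ) :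
    CountablyCompactSpace X := by
  refine isCountablyCompact_univ_iff.1 <| isCountablyCompact_iff_countable_open_cover'.2
    fun U hU hcover => ?_
  obtain ⟨F, hFU, hF, hFcover⟩ := h (U '' univ) (countable_univ.image U)
    (forall_mem_image.2 fun n _ => hU n) (by rwa [sUnion_image, biUnion_univ, ← univ_subset_iff])
  obtain ⟨t, -, ht, htcover⟩ :=
    (exists_subset_image_finite_and (p := fun F => ⋃₀ F = Set.univ)).1 ⟨F, hFU, hF, hFcover⟩
  exact ⟨t, ht, by rw [← sUnion_image, htcover]⟩

theorem lindelofSpace_of_nhds_subcover {X : Type u} [TopologicalSpace X]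
    (h : ∀ U : X → Set X, (∀ x, U x ∈ 𝓝 x) →
      ∃ t : Set X, t.Countable ∧ ⋃ x ∈ t, U x = Set.univ) :
    LindelofSpace X := by
  refine ⟨isLindelof_of_countable_subcover fun U hU hcover => ?_⟩
  choose i hi using fun x => mem_iUnion.1 (hcover (mem_univ x))
  obtain ⟨t, ht, htcover⟩ := h (U ∘ i) fun x => (hU _).mem_nhds (hi x)
  exact ⟨i '' t, ht.image i, by rw [biUnion_image, ← htcover]; rfl⟩

theorem lindelofSpace_of_calibre_diagNbhdPoset {X : Type u} [TopologicalSpace X] [T1Space X]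
    [CountablyCompactSpace X] (hcal : Calibre (DiagNbhdPoset X) ℵ₁) : LindelofSpace X := by
  refine lindelofSpace_of_nhds_subcover fun U hU => ?_
  by_contra! hfree
  obtain ⟨x, hx⟩ := exists_forall_lt_notMem_of_countable (ι := (ℵ₁ : Cardinal.{u}).ord.ToType)
    (fun α => le_aleph0_iff_set_countable.1 <| lt_aleph_one_iff.1 <| by simpa using mk_Iio_lt α)
    U hfree
  let W α : DiagNbhdPoset X := OrderDual.toDual ⟨({x α} ×ˢ (interior (U (x α)))ᶜ)ᶜ,
    compl_prod_mem_nhdsSet_diagonal isClosed_singleton isOpen_interior.isClosed_compl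
      (disjoint_singleton_left.2 fun h => h (mem_interior_iff_mem_nhds.2 (hU _)))⟩
  obtain ⟨A, hA, V, hV⟩ := hcal.exists_infinite_bddAbove_image (mk_ord_toType _) W
  have hsep : ∀ γ ∈ A, ∀ δ, γ < δ → (x γ, x δ) ∉ (OrderDual.ofDual V).1 := by
    intro γ hγ δ hγδ hmem
    exact hV ⟨γ, hγ, rfl⟩ hmem ⟨rfl, fun h => hx γ δ hγδ (interior_subset h)⟩
  obtain ⟨γ, hγ, δ, hδ, hne, hγδ, hδγ⟩ :=
    CountablyCompactSpace.exists_ne_prod_mem_of_infinite x hA (OrderDual.ofDual V).2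
  rcases hne.lt_or_gt with hlt | hlt
  · exact hsep γ hγ δ hlt hγδ
  · exact hsep δ hδ γ hlt hδγ

theorem stmt17_general {X : Type u} [TopologicalSpace X] [T2Space X]
    (hcal : Calibre (DiagNbhdPoset X) (Cardinal.aleph 1))
    (hcc : ∀ 𝒰 : Set (Set X), 𝒰.Countable → (∀ U ∈ 𝒰, IsOpen U) →
      ⋃₀ 𝒰 = Set.univ → ∃ F ⊆ 𝒰, F.Finite ∧ ⋃₀ F = Set.univ) :
    CompactSpace X :=
  have := countablyCompactSpace_of_countable_subcover hcc
  have := lindelofSpace_of_calibre_diagNbhdPoset hcal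
  LindelofSpace.compactSpace

/-- A countably compact, completely regular Hausdorff space whose neighborhood filter
of the diagonal has calibre `(ω₁, ω)` is compact. -/
theorem stmt17 {X : Type u} [TopologicalSpace X] [CompletelyRegularSpace X] [T2Space X]
    (hcal : Calibre (DiagNbhdPoset X) (Cardinal.aleph 1))
    (hcc : ∀ 𝒰 : Set (Set X), 𝒰.Countable → (∀ U ∈ 𝒰, IsOpen U) →
      ⋃₀ 𝒰 = Set.univ → ∃ F ⊆ 𝒰, F.Finite ∧ ⋃₀ F = Set.univ) :
    CompactSpace X :=
  stmt17_general hcal hcc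
end
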